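/- arXiv:2002.05009 — 12 statements merged into one kernel-verified Lean document; each statement's English description precedes it below -/
import Mathlib

section
/- Let a₁ be a bounded sesquilinear form on V × W with ‖a₁‖_{S(V×W,𝕂)} ≤ C₀, satisfying the inf-sup condition with constant c > 0 (i.e. sup_{w ∈ W, ‖w‖_W = 1} |a₁(v,w)| ≥ c‖v‖_V for all v ∈ V) and nondegenerate in the second component (a₁(v,w) = 0 for all v ∈ V implies w = 0). Then there exists a topological isomorphism T : V → W* such that ‖T‖_{L(V,W*)} ≤ C₀, ‖T⁻¹‖_{L(W*,V)} ≤ 1/c, and a₁(v,w) = (Tv)(w) for all v ∈ V and w ∈ W. -/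
/-!
The inf-sup bound says that `a₁ : V → W*` is bounded below, so it is injective with closed
range and its inverse has norm at most `1 / c`. Conjugation identifies `W*` with the dual of `W`,
so reflexivity makes every functional on `W*` an evaluation at some `w ∈ W`; one annihilating the
range of `a₁` has `w = 0` by nondegeneracy, and Hahn–Banach then shows that the range is all
of `W*`.
-/

open NormedSpace

section Reflexive

variable {𝕂 W : Type*} [RCLike 𝕂] [NormedAddCommGroup W] [NormedSpace 𝕂 W]

theorem exists_forall_eq_apply_of_surjective_inclusionInDoubleDual
    (hrefl : Function.Surjective (inclusionInDoubleDual 𝕂 W))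
    (ψ : (W →L⋆[𝕂] 𝕂) →L[𝕂] 𝕂) : ∃ w : W, ∀ f, ψ f = f w := by
  let conj : 𝕂 →L⋆[𝕂] 𝕂 := (starL 𝕂 : 𝕂 ≃L⋆[𝕂] 𝕂)
  let toAntidual : StrongDual 𝕂 W →L⋆[𝕂] (W →L⋆[𝕂] 𝕂) :=
    ContinuousLinearMap.compSL W 𝕂 𝕂 (RingHom.id 𝕂) (starRingEnd 𝕂) conj
  obtain ⟨w, hw⟩ := hrefl (conj.comp (ψ.comp toAntidual))
  refine ⟨w, fun f => ?_⟩
  have h := congr($hw (conj.comp f))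
  have hf : toAntidual (conj.comp f) = f := by ext; simp [toAntidual, conj]
  simp only [NormedSpace.dual_def, ContinuousLinearMap.comp_apply, hf] at h
  exact star_injective h.symm

end Reflexive

section Annihilator

variable {𝕂 F : Type*} [RCLike 𝕂] [NormedAddCommGroup F] [NormedSpace 𝕂 F]

theorem Submodule.eq_top_of_isClosed_of_forall_dual_eq_zero {S : Submodule 𝕂 F}
    (hS : IsClosed (S : Set F)) (h : ∀ ψ : StrongDual 𝕂 F, (∀ x ∈ S, ψ x = 0) → ψ = 0) :
    S = ⊤ := by
  have := hS
  by_contra hne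
  obtain ⟨y, hy⟩ := (SetLike.lt_iff_le_and_exists.mp (lt_top_iff_ne_top.mpr hne)).2
  obtain ⟨g, hg⟩ := SeparatingDual.exists_ne_zero (R := 𝕂)
    (mt (Submodule.Quotient.mk_eq_zero S).mp hy.2)
  refine hg ?_
  have := h (g.comp S.mkQL) fun x hx => by simp [(Submodule.Quotient.mk_eq_zero S).mpr hx]
  simpa using congr($this y)

end Annihilator

section NormSymm

variable {𝕂 E F : Type*} [NontriviallyNormedField 𝕂] [SeminormedAddCommGroup E]
  [NormedSpace 𝕂 E] [SeminormedAddCommGroup F] [NormedSpace 𝕂 F]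

theorem ContinuousLinearEquiv.norm_symm_le_one_div {c : ℝ} (e : E ≃L[𝕂] F) (hc : 0 < c)
    (h : ∀ v, c * ‖v‖ ≤ ‖e v‖) : ‖(e.symm : F →L[𝕂] E)‖ ≤ 1 / c := by
  refine ContinuousLinearMap.opNorm_le_bound _ (by positivity) fun y => ?_
  have := h (e.symm y)
  rw [e.apply_symm_apply] at this
  rw [one_div_mul_eq_div, le_div_iff₀ hc, mul_comm]
  exact this

end NormSymm

theorem lax_milgram_banach_general
    {𝕂 V W : Type*} [RCLike 𝕂]
    [NormedAddCommGroup V] [NormedSpace 𝕂 V] [CompleteSpace V]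
    [NormedAddCommGroup W] [NormedSpace 𝕂 W]
    (hrefl : Function.Surjective ⇑(NormedSpace.inclusionInDoubleDual 𝕂 W))
    (a₁ : V →L[𝕂] (W →SL[starRingEnd 𝕂] 𝕂))
    (C₀ : ℝ) (ha₁ : ‖a₁‖ ≤ C₀)
    (c : ℝ) (hc : 0 < c)
    (hinfsup : ∀ v : V, c * ‖v‖ ≤ ‖a₁ v‖)
    (hnondeg : ∀ w : W, (∀ v : V, a₁ v w = 0) → w = 0) :
    ∃ T : V ≃L[𝕂] (W →SL[starRingEnd 𝕂] 𝕂),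
      ‖(T : V →L[𝕂] (W →SL[starRingEnd 𝕂] 𝕂))‖ ≤ C₀ ∧
      ‖(T.symm : (W →SL[starRingEnd 𝕂] 𝕂) →L[𝕂] V)‖ ≤ 1 / c ∧
      ∀ (v : V) (w : W), a₁ v w = T v w := by
  have hanti : AntilipschitzWith ⟨c⁻¹, by positivity⟩ a₁ :=
    a₁.antilipschitz_of_bound fun v => (le_inv_mul_iff₀ hc).2 (hinfsup v)
  have hsurj : a₁.range = ⊤ := by
    refine Submodule.eq_top_of_isClosed_of_forall_dual_eq_zero
      (hanti.isClosed_range a₁.uniformContinuous) fun ψ hψ => ?_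
    obtain ⟨w, hw⟩ := exists_forall_eq_apply_of_surjective_inclusionInDoubleDual hrefl ψ
    obtain rfl : w = 0 := hnondeg w fun v => (hw (a₁ v)).symm.trans (hψ _ ⟨v, rfl⟩)
    ext f
    simp [hw]
  let T := ContinuousLinearEquiv.ofBijective a₁ (LinearMap.ker_eq_bot.2 hanti.injective) hsurj
  exact ⟨T, ha₁, T.norm_symm_le_one_div hc hinfsup, fun _ _ => rfl⟩

/-- Banach-space version of the Lax–Milgram lemma (Lemma 3.1):
a bounded sesquilinear form `a₁` on `V × W` (encoded as a continuous linear map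
from `V` into the space `W* = W →SL[starRingEnd 𝕂] 𝕂` of continuous antilinear
functionals on `W`) which satisfies the inf-sup condition with constant `c > 0`
and is nondegenerate in the second component induces a topological isomorphism
`T : V ≃ W*` with `‖T‖ ≤ C₀`, `‖T⁻¹‖ ≤ 1/c` and `a₁(v,w) = (Tv)(w)`. -/
theorem lax_milgram_banach
    {𝕂 V W : Type*} [RCLike 𝕂]
    [NormedAddCommGroup V] [NormedSpace 𝕂 V] [CompleteSpace V]
    [NormedAddCommGroup W] [NormedSpace 𝕂 W] [CompleteSpace W] [Nontrivial W]
    (hrefl : Function.Surjective ⇑(NormedSpace.inclusionInDoubleDual 𝕂 W))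
    (a₁ : V →L[𝕂] (W →SL[starRingEnd 𝕂] 𝕂))
    (C₀ : ℝ) (ha₁ : ‖a₁‖ ≤ C₀)
    (c : ℝ) (hc : 0 < c)
    (hinfsup : ∀ v : V, c * ‖v‖ ≤ ‖a₁ v‖)
    (hnondeg : ∀ w : W, (∀ v : V, a₁ v w = 0) → w = 0) :
    ∃ T : V ≃L[𝕂] (W →SL[starRingEnd 𝕂] 𝕂),
      ‖(T : V →L[𝕂] (W →SL[starRingEnd 𝕂] 𝕂))‖ ≤ C₀ ∧
      ‖(T.symm : (W →SL[starRingEnd 𝕂] 𝕂) →L[𝕂] V)‖ ≤ 1 / c ∧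
      ∀ (v : V) (w : W), a₁ v w = T v w :=
  lax_milgram_banach_general hrefl a₁ C₀ ha₁ c hc hinfsup hnondeg
end

section
/- Let a₁ be a bounded sesquilinear form on V × W satisfying the inf-sup condition with constant c > 0 and nondegenerate in the second component, and let d be a bounded sesquilinear form on H × W with ‖d‖_{S(H×W,𝕂)} ≤ M. Then there exists a unique bounded linear operator C̃ : H → V such that a₁(C̃x, w) = d(x,w) for all x ∈ H and w ∈ W. Moreover ‖C̃x‖_V ≤ (M/c)‖x‖_H for all x ∈ H, and if the embedding j : V → H is a compact operator, then the operators C := j∘C̃ : H → H and C^V := C̃∘j : V → V are compact. -/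
/-!
The inf-sup condition makes `v ↦ a₁ v` an antilipschitz map from `V` into the antidual `W*`,
so it is injective with closed range. A continuous functional on `W*` vanishing on that range is,
by reflexivity, evaluation at some `w ∈ W` with `a₁ v w = 0` for all `v`; nondegeneracy forces
`w = 0`, so by Hahn–Banach the range is all of `W*`. Hence `a₁` is an isomorphism `V ≃ W*` and
`C̃ = a₁⁻¹ ∘ d`; the bound follows from the inf-sup condition, and compactness from the ideal
property of compact operators.
-/

open ContinuousLinearMap

theorem ContinuousLinearMap.antilipschitz_of_mul_norm_le {𝕜 𝕜' E F : Type*}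
    [NontriviallyNormedField 𝕜] [NontriviallyNormedField 𝕜'] {σ : 𝕜 →+* 𝕜'}
    [SeminormedAddCommGroup E] [NormedSpace 𝕜 E] [SeminormedAddCommGroup F] [NormedSpace 𝕜' F]
    (f : E →SL[σ] F) {c : ℝ} (hc : 0 < c) (h : ∀ x, c * ‖x‖ ≤ ‖f x‖) :
    AntilipschitzWith (Real.toNNReal c⁻¹) f :=
  f.antilipschitz_of_bound fun x => by
    rw [Real.coe_toNNReal _ (inv_nonneg.mpr hc.le), ← div_eq_inv_mul, le_div_iff₀ hc, mul_comm]
    exact h x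

theorem Submodule.eq_top_of_forall_dual_eq_zero {𝕜 E : Type*} [RCLike 𝕜]
    [NormedAddCommGroup E] [NormedSpace 𝕜 E] {p : Submodule 𝕜 E} (hp : IsClosed (p : Set E))
    (h : ∀ Φ : StrongDual 𝕜 E, (∀ x ∈ p, Φ x = 0) → Φ = 0) : p = ⊤ := by
  have := hp -- the quotient norm on `E ⧸ p` takes closedness as an instance
  refine Submodule.eq_top_iff'.mpr fun x => ?_
  by_contra hx
  have hqx : p.mkQL x ≠ 0 := by simpa [Submodule.Quotient.mk_eq_zero] using hx
  obtain ⟨g, hg⟩ := SeparatingDual.exists_ne_zero (R := 𝕜) hqx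
  refine hg ?_
  have := h (g.comp p.mkQL) fun y hy => by simp [(Submodule.Quotient.mk_eq_zero p).mpr hy]
  simpa using congrArg (· x) this

theorem exists_eq_apply_of_surjective_inclusionInDoubleDual {𝕜 W : Type*} [RCLike 𝕜]
    [NormedAddCommGroup W] [NormedSpace 𝕜 W]
    (hrefl : Function.Surjective (NormedSpace.inclusionInDoubleDual 𝕜 W))
    (Φ : StrongDual 𝕜 (W →SL[starRingEnd 𝕜] 𝕜)) : ∃ w : W, ∀ f, Φ f = f w := by
  let star' : 𝕜 →L⋆[𝕜] 𝕜 := (starL 𝕜 : 𝕜 ≃L⋆[𝕜] 𝕜).toContinuousLinearMap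
  let conj : StrongDual 𝕜 W →SL[starRingEnd 𝕜] (W →SL[starRingEnd 𝕜] 𝕜) :=
    compSL W 𝕜 𝕜 (RingHom.id 𝕜) (starRingEnd 𝕜) star'
  -- `ℓ ↦ star (Φ (star ∘ ℓ))` is linear on the dual of `W`, hence evaluation at some `w`
  obtain ⟨w, hw⟩ := hrefl (star'.comp (Φ.comp conj))
  refine ⟨w, fun f => ?_⟩
  have := congrArg (· (star'.comp f)) hw
  have hconj : conj (star'.comp f) = f := by ext; simp [conj, star']
  exact (starRingEnd 𝕜).injective (by simpa [star', hconj] using this.symm)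

theorem ContinuousLinearMap.surjective_of_antilipschitz_of_nondegenerate {𝕜 V W : Type*}
    [RCLike 𝕜] [NormedAddCommGroup V] [NormedSpace 𝕜 V] [CompleteSpace V]
    [NormedAddCommGroup W] [NormedSpace 𝕜 W]
    (hrefl : Function.Surjective (NormedSpace.inclusionInDoubleDual 𝕜 W))
    (a : V →L[𝕜] (W →SL[starRingEnd 𝕜] 𝕜)) {K : NNReal} (ha : AntilipschitzWith K a)
    (hnondeg : ∀ w : W, (∀ v : V, a v w = 0) → w = 0) : Function.Surjective a := by
  refine LinearMap.range_eq_top.mp (Submodule.eq_top_of_forall_dual_eq_zero ?_ fun Φ hΦ => ?_)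
  · exact ha.isClosed_range a.uniformContinuous
  obtain ⟨w, hw⟩ := exists_eq_apply_of_surjective_inclusionInDoubleDual hrefl Φ
  have hw0 : w = 0 := hnondeg w fun v => (hw (a v)).symm.trans (hΦ _ ⟨v, rfl⟩)
  ext f
  simp [hw, hw0]

theorem exists_unique_solution_operator_general
    {𝕂 V W H : Type*} [RCLike 𝕂]
    [NormedAddCommGroup V] [NormedSpace 𝕂 V] [CompleteSpace V]
    [NormedAddCommGroup W] [NormedSpace 𝕂 W]
    [NormedAddCommGroup H] [NormedSpace 𝕂 H]
    (hrefl : Function.Surjective ⇑(NormedSpace.inclusionInDoubleDual 𝕂 W))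
    (j : V →L[𝕂] H)
    (a₁ : V →L[𝕂] (W →SL[starRingEnd 𝕂] 𝕂))
    (c : ℝ) (hc : 0 < c)
    (hinfsup : ∀ v : V, c * ‖v‖ ≤ ‖a₁ v‖)
    (hnondeg : ∀ w : W, (∀ v : V, a₁ v w = 0) → w = 0)
    (d : H →L[𝕂] (W →SL[starRingEnd 𝕂] 𝕂)) (M : ℝ) (hd : ‖d‖ ≤ M) :
    ∃ Ct : H →L[𝕂] V,
      (∀ (x : H) (w : W), a₁ (Ct x) w = d x w) ∧
      (∀ Ct' : H →L[𝕂] V, (∀ (x : H) (w : W), a₁ (Ct' x) w = d x w) → Ct' = Ct) ∧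
      (∀ x : H, ‖Ct x‖ ≤ (M / c) * ‖x‖) ∧
      (IsCompactOperator ⇑j →
        IsCompactOperator ⇑(j.comp Ct) ∧ IsCompactOperator ⇑(Ct.comp j)) := by
  have hanti := a₁.antilipschitz_of_mul_norm_le hc hinfsup
  have hsurj := a₁.surjective_of_antilipschitz_of_nondegenerate hrefl hanti hnondeg
  let e := ContinuousLinearEquiv.ofBijective a₁ (LinearMap.ker_eq_bot.mpr hanti.injective)
    (LinearMap.range_eq_top.mpr hsurj)
  have he : ∀ x, a₁ (e.symm (d x)) = d x := fun x => e.apply_symm_apply (d x)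
  refine ⟨(e.symm : _ →L[𝕂] V).comp d, fun x w => by simp [he], fun Ct' hCt' => ?_,
    fun x => ?_, fun hj => ⟨hj.comp_clm _, by rw [coe_comp]; exact hj.clm_comp _⟩⟩
  · ext x
    exact hanti.injective (by ext w; simp [he, hCt'])
  · rw [div_mul_eq_mul_div, le_div_iff₀ hc, mul_comm]
    calc c * ‖e.symm (d x)‖ ≤ ‖d x‖ := (hinfsup _).trans_eq (by rw [he])
      _ ≤ M * ‖x‖ := d.le_of_opNorm_le hd x

/-- Lemma 3.3 (abstract version): given a bounded sesquilinear form `a₁` on `V × W`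
satisfying the inf-sup condition and nondegenerate in the second component, and a
bounded sesquilinear form `d` on `H × W` with `‖d‖ ≤ M`, there is a unique bounded
linear operator `C̃ : H → V` with `a₁(C̃x, w) = d(x, w)`; it satisfies
`‖C̃x‖_V ≤ (M/c)‖x‖_H`, and if `j : V → H` is compact then `j∘C̃` and `C̃∘j`
are compact. -/
theorem exists_unique_solution_operator
    {𝕂 V W H : Type*} [RCLike 𝕂]
    [NormedAddCommGroup V] [NormedSpace 𝕂 V] [CompleteSpace V]
    [NormedAddCommGroup W] [NormedSpace 𝕂 W] [CompleteSpace W] [Nontrivial W]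
    [NormedAddCommGroup H] [NormedSpace 𝕂 H] [CompleteSpace H]
    (hrefl : Function.Surjective ⇑(NormedSpace.inclusionInDoubleDual 𝕂 W))
    (j : V →L[𝕂] H) (hj : Function.Injective ⇑j)
    (a₁ : V →L[𝕂] (W →SL[starRingEnd 𝕂] 𝕂))
    (c : ℝ) (hc : 0 < c)
    (hinfsup : ∀ v : V, c * ‖v‖ ≤ ‖a₁ v‖)
    (hnondeg : ∀ w : W, (∀ v : V, a₁ v w = 0) → w = 0)
    (d : H →L[𝕂] (W →SL[starRingEnd 𝕂] 𝕂)) (M : ℝ) (hd : ‖d‖ ≤ M) :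
    ∃ Ct : H →L[𝕂] V,
      (∀ (x : H) (w : W), a₁ (Ct x) w = d x w) ∧
      (∀ Ct' : H →L[𝕂] V, (∀ (x : H) (w : W), a₁ (Ct' x) w = d x w) → Ct' = Ct) ∧
      (∀ x : H, ‖Ct x‖ ≤ (M / c) * ‖x‖) ∧
      (IsCompactOperator ⇑j →
        IsCompactOperator ⇑(j.comp Ct) ∧ IsCompactOperator ⇑(Ct.comp j)) :=
  exists_unique_solution_operator_general hrefl j a₁ c hc hinfsup hnondeg d M hd
end

section
/- Let E be a topological space, X a Banach space over 𝕂, U ⊆ X nonempty and open, and let 𝔞₁ : E → S(V × W, 𝕂) and 𝔠 : E × U → S(H × W, 𝕂) be continuous (E × U carrying the product topology), where for each t ∈ E the form 𝔞₁(t) satisfies the inf-sup condition with some constant c(t) > 0 and is nondegenerate in the second component. Let C̃_{t,m} : H → V be the unique bounded operator with 𝔞₁(t)(C̃_{t,m}x, w) = 𝔠(t,m)(x,w) for all x ∈ H, w ∈ W. Then the maps (t,m) ↦ j∘C̃_{t,m} ∈ L(H) and (t,m) ↦ C̃_{t,m}∘j ∈ L(V) are continuous on E × U (with respect to the operator norms).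 -/
open Filter Topology ContinuousLinearMap

/-- Auxiliary continuity lemma over a generic codomain `Y` (standing for the
antidual `W*`): if `𝔞₁` is continuous with a uniform-per-point inf-sup bound and
`𝔠` is continuous on `S`, then the solution operators `Ct` depend continuously
(in operator norm) on the parameters. -/
theorem aux_solution_operator_continuous
    {𝕂 V Y H X E : Type*} [RCLike 𝕂] [TopologicalSpace E]
    [NormedAddCommGroup V] [NormedSpace 𝕂 V]
    [NormedAddCommGroup Y] [NormedSpace 𝕂 Y]
    [NormedAddCommGroup H] [NormedSpace 𝕂 H]
    [NormedAddCommGroup X] [NormedSpace 𝕂 X]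
    (U : Set X)
    (𝔞₁ : E → (V →L[𝕂] Y)) (h𝔞₁ : Continuous 𝔞₁)
    (𝔠 : E × X → (H →L[𝕂] Y))
    (h𝔠 : ContinuousOn 𝔠 (Set.univ ×ˢ U))
    (c : E → ℝ) (hc : ∀ t, 0 < c t)
    (hinfsup : ∀ (t : E) (v : V), c t * ‖v‖ ≤ ‖𝔞₁ t v‖)
    (Ct : E → X → (H →L[𝕂] V))
    (hCt : ∀ (t : E), ∀ m ∈ U, ∀ (x : H), 𝔞₁ t ((Ct t m) x) = 𝔠 (t, m) x) :
    ContinuousOn (fun p : E × X => Ct p.1 p.2) (Set.univ ×ˢ U) := by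
  set S : Set (E × X) := Set.univ ×ˢ U with hS
  rintro ⟨t₀, m₀⟩ hp₀
  have hm₀ : m₀ ∈ U := hp₀.2
  rw [ContinuousWithinAt, tendsto_iff_norm_sub_tendsto_zero]
  set M : ℝ := 2 * (‖𝔠 (t₀, m₀)‖ + 1) / c t₀ with hM
  have hMnn : 0 ≤ M := by
    apply div_nonneg _ (hc t₀).le
    positivity
  have ha : Tendsto (fun p : E × X => ‖𝔞₁ p.1 - 𝔞₁ t₀‖) (𝓝[S] (t₀, m₀)) (𝓝 0) := by
    have h1 : Tendsto 𝔞₁ (𝓝 t₀) (𝓝 (𝔞₁ t₀)) := h𝔞₁.tendsto t₀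
    rw [tendsto_iff_norm_sub_tendsto_zero] at h1
    have h2 : Tendsto (fun p : E × X => p.1) (𝓝[S] (t₀, m₀)) (𝓝 t₀) :=
      (continuous_fst.tendsto _).mono_left nhdsWithin_le_nhds
    exact h1.comp h2
  have hb : Tendsto (fun p : E × X => ‖𝔠 p - 𝔠 (t₀, m₀)‖) (𝓝[S] (t₀, m₀)) (𝓝 0) := by
    have h1 : Tendsto 𝔠 (𝓝[S] (t₀, m₀)) (𝓝 (𝔠 (t₀, m₀))) := h𝔠 (t₀, m₀) hp₀
    rw [tendsto_iff_norm_sub_tendsto_zero] at h1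
    exact h1
  -- the eventual bound
  have hbound : ∀ᶠ p : E × X in 𝓝[S] (t₀, m₀),
      ‖Ct p.1 p.2 - Ct t₀ m₀‖ ≤ (‖𝔞₁ p.1 - 𝔞₁ t₀‖ * M + ‖𝔠 p - 𝔠 (t₀, m₀)‖) / c t₀ := by
    have hev1 : ∀ᶠ p : E × X in 𝓝[S] (t₀, m₀), ‖𝔞₁ p.1 - 𝔞₁ t₀‖ ≤ c t₀ / 2 :=
      ha.eventually_le_const (by linarith [hc t₀])
    have hev2 : ∀ᶠ p : E × X in 𝓝[S] (t₀, m₀), ‖𝔠 p - 𝔠 (t₀, m₀)‖ ≤ 1 :=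
      hb.eventually_le_const one_pos
    have hev3 : ∀ᶠ p : E × X in 𝓝[S] (t₀, m₀), p ∈ S := self_mem_nhdsWithin
    filter_upwards [hev1, hev2, hev3] with p h1 h2 h3
    obtain ⟨t, m⟩ := p
    have hm : m ∈ U := h3.2
    have hann : (0:ℝ) ≤ ‖𝔞₁ t - 𝔞₁ t₀‖ := norm_nonneg _
    have hbnn : (0:ℝ) ≤ ‖𝔠 (t, m) - 𝔠 (t₀, m₀)‖ := norm_nonneg _
    -- uniform a priori bound ‖Ct t m x‖ ≤ M ‖x‖
    have hCbound : ∀ x : H, ‖Ct t m x‖ ≤ M * ‖x‖ := by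
      intro x
      set v : V := Ct t m x with hv
      have e1 : c t₀ * ‖v‖ ≤ ‖𝔞₁ t₀ v‖ := hinfsup t₀ v
      have e2 : ‖𝔞₁ t₀ v‖ ≤ ‖𝔞₁ t v‖ + ‖𝔞₁ t - 𝔞₁ t₀‖ * ‖v‖ := by
        have g0 : ‖𝔞₁ t₀ v - 𝔞₁ t v‖ ≤ ‖𝔞₁ t - 𝔞₁ t₀‖ * ‖v‖ := by
          have g1 : 𝔞₁ t₀ v - 𝔞₁ t v = (𝔞₁ t₀ - 𝔞₁ t) v := by simp
          rw [g1]
          calc ‖(𝔞₁ t₀ - 𝔞₁ t) v‖ ≤ ‖𝔞₁ t₀ - 𝔞₁ t‖ * ‖v‖ := le_opNorm _ _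
            _ = ‖𝔞₁ t - 𝔞₁ t₀‖ * ‖v‖ := by rw [norm_sub_rev]
        calc ‖𝔞₁ t₀ v‖ = ‖𝔞₁ t v + (𝔞₁ t₀ v - 𝔞₁ t v)‖ := by
              congr 1; abel
          _ ≤ ‖𝔞₁ t v‖ + ‖𝔞₁ t₀ v - 𝔞₁ t v‖ := norm_add_le _ _
          _ ≤ ‖𝔞₁ t v‖ + ‖𝔞₁ t - 𝔞₁ t₀‖ * ‖v‖ := by linarith
      have e3 : ‖𝔞₁ t v‖ ≤ (‖𝔠 (t₀, m₀)‖ + 1) * ‖x‖ := by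
        rw [hv, hCt t m hm x]
        calc ‖𝔠 (t, m) x‖ ≤ ‖𝔠 (t, m)‖ * ‖x‖ := le_opNorm _ _
          _ ≤ (‖𝔠 (t₀, m₀)‖ + 1) * ‖x‖ := by
              apply mul_le_mul_of_nonneg_right _ (norm_nonneg x)
              calc ‖𝔠 (t, m)‖ = ‖𝔠 (t₀, m₀) + (𝔠 (t, m) - 𝔠 (t₀, m₀))‖ := by
                    congr 1; abel
                _ ≤ ‖𝔠 (t₀, m₀)‖ + ‖𝔠 (t, m) - 𝔠 (t₀, m₀)‖ := norm_add_le _ _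
                _ ≤ ‖𝔠 (t₀, m₀)‖ + 1 := by linarith
      have e4 : (c t₀ / 2) * ‖v‖ ≤ (‖𝔠 (t₀, m₀)‖ + 1) * ‖x‖ := by
        nlinarith [norm_nonneg v]
      rw [hM, div_mul_eq_mul_div, le_div_iff₀ (hc t₀)]
      nlinarith [norm_nonneg v]
    -- main estimate
    apply opNorm_le_bound _
      (div_nonneg (add_nonneg (mul_nonneg hann hMnn) hbnn) (hc t₀).le)
    intro x
    have e1 : c t₀ * ‖Ct t m x - Ct t₀ m₀ x‖ ≤ ‖𝔞₁ t₀ (Ct t m x - Ct t₀ m₀ x)‖ :=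
      hinfsup t₀ _
    have e2 : 𝔞₁ t₀ (Ct t m x - Ct t₀ m₀ x)
        = (𝔞₁ t₀ - 𝔞₁ t) (Ct t m x) + (𝔠 (t, m) x - 𝔠 (t₀, m₀) x) := by
      have h𝔞v : 𝔞₁ t (Ct t m x) = 𝔠 (t, m) x := hCt t m hm x
      have h𝔞v₀ : 𝔞₁ t₀ (Ct t₀ m₀ x) = 𝔠 (t₀, m₀) x := hCt t₀ m₀ hm₀ x
      simp only [map_sub, sub_apply]
      rw [h𝔞v, h𝔞v₀]
      abel
    have e3 : ‖𝔞₁ t₀ (Ct t m x - Ct t₀ m₀ x)‖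
        ≤ ‖𝔞₁ t - 𝔞₁ t₀‖ * ‖Ct t m x‖ + ‖𝔠 (t, m) - 𝔠 (t₀, m₀)‖ * ‖x‖ := by
      rw [e2]
      have g1 : ‖(𝔞₁ t₀ - 𝔞₁ t) (Ct t m x)‖ ≤ ‖𝔞₁ t - 𝔞₁ t₀‖ * ‖Ct t m x‖ := by
        calc ‖(𝔞₁ t₀ - 𝔞₁ t) (Ct t m x)‖ ≤ ‖𝔞₁ t₀ - 𝔞₁ t‖ * ‖Ct t m x‖ := le_opNorm _ _
          _ = ‖𝔞₁ t - 𝔞₁ t₀‖ * ‖Ct t m x‖ := by rw [norm_sub_rev]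
      have g2 : ‖𝔠 (t, m) x - 𝔠 (t₀, m₀) x‖ ≤ ‖𝔠 (t, m) - 𝔠 (t₀, m₀)‖ * ‖x‖ := by
        have : 𝔠 (t, m) x - 𝔠 (t₀, m₀) x = (𝔠 (t, m) - 𝔠 (t₀, m₀)) x := by simp
        rw [this]
        exact le_opNorm _ _
      calc ‖(𝔞₁ t₀ - 𝔞₁ t) (Ct t m x) + (𝔠 (t, m) x - 𝔠 (t₀, m₀) x)‖
          ≤ ‖(𝔞₁ t₀ - 𝔞₁ t) (Ct t m x)‖ + ‖𝔠 (t, m) x - 𝔠 (t₀, m₀) x‖ := norm_add_le _ _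
        _ ≤ ‖𝔞₁ t - 𝔞₁ t₀‖ * ‖Ct t m x‖ + ‖𝔠 (t, m) - 𝔠 (t₀, m₀)‖ * ‖x‖ := by linarith
    have e4 : ‖Ct t m x‖ ≤ M * ‖x‖ := hCbound x
    have e5 : c t₀ * ‖Ct t m x - Ct t₀ m₀ x‖
        ≤ (‖𝔞₁ t - 𝔞₁ t₀‖ * M + ‖𝔠 (t, m) - 𝔠 (t₀, m₀)‖) * ‖x‖ := by
      nlinarith [norm_nonneg x]
    have hsub : (Ct t m - Ct t₀ m₀) x = Ct t m x - Ct t₀ m₀ x := by simp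
    rw [hsub, div_mul_eq_mul_div, le_div_iff₀ (hc t₀)]
    linarith
  have hlim : Tendsto (fun p : E × X =>
      (‖𝔞₁ p.1 - 𝔞₁ t₀‖ * M + ‖𝔠 p - 𝔠 (t₀, m₀)‖) / c t₀) (𝓝[S] (t₀, m₀)) (𝓝 0) := by
    have := ((ha.mul_const M).add hb).div_const (c t₀)
    simpa using this
  exact squeeze_zero' (Eventually.of_forall fun p => norm_nonneg _) hbound hlim

/-- Continuity in the parameters (Lemma 3.3 a), b)): if `𝔞₁ : E → S(V×W,𝕂)` and
`𝔠 : E × U → S(H×W,𝕂)` are continuous and `C̃_{t,m} : H → V` denotes the unique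
bounded operator with `𝔞₁(t)(C̃_{t,m}x, w) = 𝔠(t,m)(x,w)`, then
`(t,m) ↦ j∘C̃_{t,m} ∈ L(H)` and `(t,m) ↦ C̃_{t,m}∘j ∈ L(V)` are continuous on `E × U`. -/
theorem solution_operator_continuous_in_parameters
    {𝕂 V W H X E : Type*} [RCLike 𝕂] [TopologicalSpace E]
    [NormedAddCommGroup V] [NormedSpace 𝕂 V] [CompleteSpace V]
    [NormedAddCommGroup W] [NormedSpace 𝕂 W] [CompleteSpace W] [Nontrivial W]
    [NormedAddCommGroup H] [NormedSpace 𝕂 H] [CompleteSpace H]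
    [NormedAddCommGroup X] [NormedSpace 𝕂 X] [CompleteSpace X]
    (hrefl : Function.Surjective ⇑(NormedSpace.inclusionInDoubleDual 𝕂 W))
    (j : V →L[𝕂] H) (hj : Function.Injective ⇑j)
    (U : Set X) (hUopen : IsOpen U) (hUne : U.Nonempty)
    (𝔞₁ : E → (V →L[𝕂] (W →SL[starRingEnd 𝕂] 𝕂))) (h𝔞₁ : Continuous 𝔞₁)
    (𝔠 : E × X → (H →L[𝕂] (W →SL[starRingEnd 𝕂] 𝕂)))
    (h𝔠 : ContinuousOn 𝔠 (Set.univ ×ˢ U))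
    (c : E → ℝ) (hc : ∀ t, 0 < c t)
    (hinfsup : ∀ (t : E) (v : V), c t * ‖v‖ ≤ ‖𝔞₁ t v‖)
    (hnondeg : ∀ (t : E) (w : W), (∀ v : V, 𝔞₁ t v w = 0) → w = 0)
    (Ct : E → X → (H →L[𝕂] V))
    (hCt : ∀ (t : E), ∀ m ∈ U, ∀ (x : H) (w : W),
      𝔞₁ t ((Ct t m) x) w = 𝔠 (t, m) x w) :
    ContinuousOn (fun p : E × X => j.comp (Ct p.1 p.2)) (Set.univ ×ˢ U) ∧
    ContinuousOn (fun p : E × X => (Ct p.1 p.2).comp j) (Set.univ ×ˢ U) := by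
  have hCt' : ∀ (t : E), ∀ m ∈ U, ∀ x : H, 𝔞₁ t ((Ct t m) x) = 𝔠 (t, m) x := by
    intro t m hm x
    ext w
    exact hCt t m hm x w
  have key : ContinuousOn (fun p : E × X => Ct p.1 p.2) (Set.univ ×ˢ U) :=
    aux_solution_operator_continuous U 𝔞₁ h𝔞₁ 𝔠 h𝔠 c hc hinfsup Ct hCt'
  constructor
  · exact ((compL 𝕂 H V H j).continuous.comp_continuousOn key : _)
  · exact (((compL 𝕂 V H V).flip j).continuous.comp_continuousOn key : _)
end

section
/- In the setting of a bounded sesquilinear form a₁ on V × W (inf-sup condition with constant c > 0, nondegenerate in the second component), a bounded sesquilinear form d on H × W, and the associated operators T : V → W* and C^V = C̃∘j ∈ L(V): the variational problem is strongly well-posed (i.e. for every φ ∈ W* there exists exactly one u ∈ V with a₁(u,w) + d(ju,w) = φ(w) for all w ∈ W) if and only if the operator I_V + C^V : V → V is bijective. In that case I_V + C^V has a bounded inverse, the unique solution is u = (I_V + C^V)⁻¹(T⁻¹φ), and u depends continuously on φ ∈ W*. -/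
/-!
Since `a₁(C̃ x, ·) = d(x, ·)` and `a₁(v, ·) = T v`, the function `u` solves the problem with
right-hand side `φ` exactly when `T (u + C^V u) = φ`. As `T` is an isomorphism, unique
solvability for every `φ` is therefore bijectivity of `I_V + C^V`, and the bounded inverse
comes from the open mapping theorem on the Banach space `V`.
-/

section

variable {𝕂 V W H : Type*} [RCLike 𝕂]
  [NormedAddCommGroup V] [NormedSpace 𝕂 V]
  [NormedAddCommGroup W] [NormedSpace 𝕂 W]
  [NormedAddCommGroup H] [NormedSpace 𝕂 H]

theorem forall_apply_add_eq_iff {a₁ : V →L[𝕂] (W →SL[starRingEnd 𝕂] 𝕂)}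
    {d : H →L[𝕂] (W →SL[starRingEnd 𝕂] 𝕂)} {Ct : H →L[𝕂] V}
    (hCt : ∀ (x : H) (w : W), a₁ (Ct x) w = d x w) (j : V → H) (u : V)
    (φ : W →SL[starRingEnd 𝕂] 𝕂) :
    (∀ w : W, a₁ u w + d (j u) w = φ w) ↔ a₁ (u + Ct (j u)) = φ := by
  simp only [ContinuousLinearMap.ext_iff, map_add, add_apply, hCt]

end

theorem strongly_well_posed_iff_bijective_general
    {𝕂 V W H : Type*} [RCLike 𝕂]
    [NormedAddCommGroup V] [NormedSpace 𝕂 V] [CompleteSpace V]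
    [NormedAddCommGroup W] [NormedSpace 𝕂 W]
    [NormedAddCommGroup H] [NormedSpace 𝕂 H]
    (j : V →L[𝕂] H)
    (a₁ : V →L[𝕂] (W →SL[starRingEnd 𝕂] 𝕂))
    (T : V ≃L[𝕂] (W →SL[starRingEnd 𝕂] 𝕂))
    (hT : ∀ (v : V) (w : W), a₁ v w = T v w)
    (d : H →L[𝕂] (W →SL[starRingEnd 𝕂] 𝕂))
    (Ct : H →L[𝕂] V)
    (hCt : ∀ (x : H) (w : W), a₁ (Ct x) w = d x w) :
    ((∀ φ : W →SL[starRingEnd 𝕂] 𝕂, ∃! u : V, ∀ w : W, a₁ u w + d (j u) w = φ w) ↔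
      Function.Bijective fun u : V => u + Ct (j u)) ∧
    ((Function.Bijective fun u : V => u + Ct (j u)) →
      ∃ Binv : V →L[𝕂] V,
        (∀ v : V, Binv (v + Ct (j v)) = v) ∧
        (∀ v : V, Binv v + Ct (j (Binv v)) = v) ∧
        (∀ φ : W →SL[starRingEnd 𝕂] 𝕂,
          ∀ w : W, a₁ (Binv (T.symm φ)) w + d (j (Binv (T.symm φ))) w = φ w) ∧
        Continuous fun φ : W →SL[starRingEnd 𝕂] 𝕂 => Binv (T.symm φ)) := by
  have ha₁ : a₁ = T := ContinuousLinearMap.ext fun v => ContinuousLinearMap.ext (hT v)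
  have hsolves (φ : W →SL[starRingEnd 𝕂] 𝕂) (u : V) :
      (∀ w : W, a₁ u w + d (j u) w = φ w) ↔ T (u + Ct (j u)) = φ := by
    rw [forall_apply_add_eq_iff hCt, ha₁]; rfl
  refine ⟨?_, fun hbij => ?_⟩
  · simp_rw [hsolves]
    exact (Function.bijective_iff_existsUnique _).symm.trans (EquivLike.comp_bijective _ T)
  · let B : V ≃L[𝕂] V := .ofBijective (.id 𝕂 V + Ct.comp j)
      (LinearMap.ker_eq_bot_of_injective hbij.injective)
      (LinearMap.range_eq_top.mpr hbij.surjective)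
    refine ⟨B.symm, B.symm_apply_apply, B.apply_symm_apply, fun φ => ?_, by fun_prop⟩
    exact (hsolves φ _).2 ((congrArg T (B.apply_symm_apply _)).trans (T.apply_symm_apply φ))

/-- Proposition 3.5 b): the variational problem is strongly well-posed iff
`I_V + C^V` is bijective; in that case `I_V + C^V` has a bounded inverse, the unique
solution is `u = (I_V + C^V)⁻¹ T⁻¹ φ`, and it depends continuously on `φ`. -/
theorem strongly_well_posed_iff_bijective
    {𝕂 V W H : Type*} [RCLike 𝕂]
    [NormedAddCommGroup V] [NormedSpace 𝕂 V] [CompleteSpace V]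
    [NormedAddCommGroup W] [NormedSpace 𝕂 W] [CompleteSpace W] [Nontrivial W]
    [NormedAddCommGroup H] [NormedSpace 𝕂 H] [CompleteSpace H]
    (hrefl : Function.Surjective ⇑(NormedSpace.inclusionInDoubleDual 𝕂 W))
    (j : V →L[𝕂] H) (hj : Function.Injective ⇑j)
    (a₁ : V →L[𝕂] (W →SL[starRingEnd 𝕂] 𝕂))
    (c : ℝ) (hc : 0 < c)
    (hinfsup : ∀ v : V, c * ‖v‖ ≤ ‖a₁ v‖)
    (hnondeg : ∀ w : W, (∀ v : V, a₁ v w = 0) → w = 0)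
    (T : V ≃L[𝕂] (W →SL[starRingEnd 𝕂] 𝕂))
    (hT : ∀ (v : V) (w : W), a₁ v w = T v w)
    (d : H →L[𝕂] (W →SL[starRingEnd 𝕂] 𝕂))
    (Ct : H →L[𝕂] V)
    (hCt : ∀ (x : H) (w : W), a₁ (Ct x) w = d x w) :
    ((∀ φ : W →SL[starRingEnd 𝕂] 𝕂, ∃! u : V, ∀ w : W, a₁ u w + d (j u) w = φ w) ↔
      Function.Bijective fun u : V => u + Ct (j u)) ∧
    ((Function.Bijective fun u : V => u + Ct (j u)) →
      ∃ Binv : V →L[𝕂] V,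
        (∀ v : V, Binv (v + Ct (j v)) = v) ∧
        (∀ v : V, Binv v + Ct (j (Binv v)) = v) ∧
        (∀ φ : W →SL[starRingEnd 𝕂] 𝕂,
          ∀ w : W, a₁ (Binv (T.symm φ)) w + d (j (Binv (T.symm φ))) w = φ w) ∧
        Continuous fun φ : W →SL[starRingEnd 𝕂] 𝕂 => Binv (T.symm φ)) :=
  strongly_well_posed_iff_bijective_general j a₁ T hT d Ct hCt
end

section
/- Assume W = V (with the same norm), V is reflexive, and j : V → H is injective with dense range. Let a₁ be a bounded sesquilinear form on V × V satisfying the inf-sup condition with constant c > 0 and nondegenerate in the second component, and let d be a bounded sesquilinear form on H × V. Then the set A := {(ju, φ) ∈ H × H* : u ∈ V and a₁(u,v) + d(ju,v) = φ(jv) for all v ∈ V} is the graph of a single-valued linear operator from a subspace of H to H*, and A is a closed subset of H × H*. -/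
/-!
`A` is the preimage of the subspace `{(j u, a₁ u) : u ∈ V}` of `H × V*` under the continuous
linear map `(x, φ) ↦ (x, φ ∘ j - d x)`, hence a linear subspace. By the inf-sup condition
`u ↦ (j u, a₁ u)` is antilipschitz, so its range is complete and thus closed, and `A` is closed.
It is single-valued since `j` is injective, so `x` determines `u`, and then `φ ∘ j = a₁ u + d (j u)`
determines `φ` because `j` has dense range.
-/

theorem AntilipschitzWith.prodMk_right {α β γ : Type*} [PseudoEMetricSpace α]
    [PseudoEMetricSpace β] [PseudoEMetricSpace γ] {K : NNReal} {f : α → β}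
    (hf : AntilipschitzWith K f) (g : α → γ) : AntilipschitzWith K fun x => (g x, f x) :=
  fun x y => (hf x y).trans (by gcongr; exact le_max_right _ _)

theorem ContinuousLinearMap.antilipschitz_of_lower_bound {𝕜 𝕜₂ E F : Type*}
    [NontriviallyNormedField 𝕜] [NontriviallyNormedField 𝕜₂] {σ : 𝕜 →+* 𝕜₂}
    [SeminormedAddCommGroup E] [NormedSpace 𝕜 E] [SeminormedAddCommGroup F] [NormedSpace 𝕜₂ F]
    (f : E →SL[σ] F) {c : ℝ} (hc : 0 < c) (h : ∀ x, c * ‖x‖ ≤ ‖f x‖) :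
    AntilipschitzWith c.toNNReal⁻¹ f :=
  f.antilipschitz_of_bound fun x => by
    rw [NNReal.coe_inv, Real.coe_toNNReal c hc.le, inv_mul_eq_div, le_div_iff₀ hc, mul_comm]
    exact h x

section FormRelation

variable {𝕂 V H : Type*} [RCLike 𝕂] [NormedAddCommGroup V] [NormedSpace 𝕂 V]
  [NormedAddCommGroup H] [NormedSpace 𝕂 H]

noncomputable def formRelationMap (j : V →L[𝕂] H) (d : H →L[𝕂] V →SL[starRingEnd 𝕂] 𝕂) :
    H × (H →SL[starRingEnd 𝕂] 𝕂) →L[𝕂] H × (V →SL[starRingEnd 𝕂] 𝕂) :=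
  (ContinuousLinearMap.fst 𝕂 _ _).prod
    (((ContinuousLinearMap.compSL V H 𝕂 (RingHom.id 𝕂) (starRingEnd 𝕂)).flip j).comp
      (ContinuousLinearMap.snd 𝕂 _ _) - d.comp (ContinuousLinearMap.fst 𝕂 _ _))

/-- The relation `A`. -/
noncomputable def formRelation (j : V →L[𝕂] H) (a₁ : V →L[𝕂] V →SL[starRingEnd 𝕂] 𝕂)
    (d : H →L[𝕂] V →SL[starRingEnd 𝕂] 𝕂) : Submodule 𝕂 (H × (H →SL[starRingEnd 𝕂] 𝕂)) :=
  (LinearMap.range (j.prod a₁).toLinearMap).comap (formRelationMap j d).toLinearMap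

variable {j : V →L[𝕂] H} {a₁ : V →L[𝕂] V →SL[starRingEnd 𝕂] 𝕂}
  {d : H →L[𝕂] V →SL[starRingEnd 𝕂] 𝕂}

theorem mem_formRelation {p : H × (H →SL[starRingEnd 𝕂] 𝕂)} :
    p ∈ formRelation j a₁ d ↔ ∃ u : V, p.1 = j u ∧ ∀ v : V, a₁ u v + d (j u) v = p.2 (j v) := by
  simp only [formRelation, Submodule.mem_comap, LinearMap.mem_range]
  refine exists_congr fun u => Prod.ext_iff.trans <|
    (and_congr_right fun hx => ?_).trans (and_congr_left' eq_comm)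
  obtain ⟨x, φ⟩ := p
  subst hx
  simp [formRelationMap, ContinuousLinearMap.ext_iff, eq_sub_iff_add_eq]

theorem eq_of_mem_formRelation (hj : Function.Injective j) (hjdense : DenseRange j)
    {x : H} {φ₁ φ₂ : H →SL[starRingEnd 𝕂] 𝕂} (h₁ : (x, φ₁) ∈ formRelation j a₁ d)
    (h₂ : (x, φ₂) ∈ formRelation j a₁ d) : φ₁ = φ₂ := by
  obtain ⟨u₁, rfl, hu₁⟩ := mem_formRelation.1 h₁
  obtain ⟨u₂, hju, hu₂⟩ := mem_formRelation.1 h₂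
  obtain rfl := hj hju
  exact DFunLike.coe_injective <| hjdense.equalizer φ₁.continuous φ₂.continuous <|
    funext fun v => (hu₁ v).symm.trans (hu₂ v)

theorem isClosed_formRelation [CompleteSpace V] {K : NNReal} (ha₁ : AntilipschitzWith K a₁) :
    IsClosed (formRelation j a₁ d : Set (H × (H →SL[starRingEnd 𝕂] 𝕂))) := by
  rw [formRelation, Submodule.comap_coe, LinearMap.coe_range]
  exact ((ha₁.prodMk_right j).isClosed_range (j.prod a₁).uniformContinuous).preimage
    (formRelationMap j d).continuous

end FormRelation

theorem operator_A_is_closed_linear_general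
    {𝕂 V H : Type*} [RCLike 𝕂]
    [NormedAddCommGroup V] [NormedSpace 𝕂 V] [CompleteSpace V]
    [NormedAddCommGroup H] [NormedSpace 𝕂 H]
    (j : V →L[𝕂] H) (hj : Function.Injective ⇑j) (hjdense : DenseRange ⇑j)
    (a₁ : V →L[𝕂] (V →SL[starRingEnd 𝕂] 𝕂))
    (c : ℝ) (hc : 0 < c)
    (hinfsup : ∀ v : V, c * ‖v‖ ≤ ‖a₁ v‖)
    (d : H →L[𝕂] (V →SL[starRingEnd 𝕂] 𝕂)) :
    (∀ (x : H) (φ₁ φ₂ : H →SL[starRingEnd 𝕂] 𝕂),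
        (∃ u : V, x = j u ∧ ∀ v : V, a₁ u v + d (j u) v = φ₁ (j v)) →
        (∃ u : V, x = j u ∧ ∀ v : V, a₁ u v + d (j u) v = φ₂ (j v)) → φ₁ = φ₂) ∧
    (∀ p q : H × (H →SL[starRingEnd 𝕂] 𝕂),
        p ∈ {p : H × (H →SL[starRingEnd 𝕂] 𝕂) |
              ∃ u : V, p.1 = j u ∧ ∀ v : V, a₁ u v + d (j u) v = p.2 (j v)} →
        q ∈ {p : H × (H →SL[starRingEnd 𝕂] 𝕂) |
              ∃ u : V, p.1 = j u ∧ ∀ v : V, a₁ u v + d (j u) v = p.2 (j v)} →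
        p + q ∈ {p : H × (H →SL[starRingEnd 𝕂] 𝕂) |
              ∃ u : V, p.1 = j u ∧ ∀ v : V, a₁ u v + d (j u) v = p.2 (j v)}) ∧
    (∀ (k : 𝕂) (p : H × (H →SL[starRingEnd 𝕂] 𝕂)),
        p ∈ {p : H × (H →SL[starRingEnd 𝕂] 𝕂) |
              ∃ u : V, p.1 = j u ∧ ∀ v : V, a₁ u v + d (j u) v = p.2 (j v)} →
        k • p ∈ {p : H × (H →SL[starRingEnd 𝕂] 𝕂) |
              ∃ u : V, p.1 = j u ∧ ∀ v : V, a₁ u v + d (j u) v = p.2 (j v)}) ∧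
    IsClosed {p : H × (H →SL[starRingEnd 𝕂] 𝕂) |
              ∃ u : V, p.1 = j u ∧ ∀ v : V, a₁ u v + d (j u) v = p.2 (j v)} := by
  have hA : {p : H × (H →SL[starRingEnd 𝕂] 𝕂) |
      ∃ u : V, p.1 = j u ∧ ∀ v : V, a₁ u v + d (j u) v = p.2 (j v)} = formRelation j a₁ d :=
    Set.ext fun _ => mem_formRelation.symm
  rw [hA]
  exact ⟨fun x φ₁ φ₂ h₁ h₂ => eq_of_mem_formRelation hj hjdense
      (mem_formRelation.2 h₁) (mem_formRelation.2 h₂),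
    fun p q => (formRelation j a₁ d).add_mem, fun k p => (formRelation j a₁ d).smul_mem k,
    isClosed_formRelation (a₁.antilipschitz_of_lower_bound hc hinfsup)⟩

/-- Theorem 3.8 a): with `W = V` reflexive and `j : V → H` injective with dense range,
the relation `A = {(ju, φ) ∈ H × H* : a₁(u,v) + d(ju,v) = φ(jv) for all v ∈ V}`
is (the graph of) a single-valued linear operator from `H` to `H*`, and it is closed. -/
theorem operator_A_is_closed_linear
    {𝕂 V H : Type*} [RCLike 𝕂]
    [NormedAddCommGroup V] [NormedSpace 𝕂 V] [CompleteSpace V] [Nontrivial V]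
    [NormedAddCommGroup H] [NormedSpace 𝕂 H] [CompleteSpace H]
    (hrefl : Function.Surjective ⇑(NormedSpace.inclusionInDoubleDual 𝕂 V))
    (j : V →L[𝕂] H) (hj : Function.Injective ⇑j) (hjdense : DenseRange ⇑j)
    (a₁ : V →L[𝕂] (V →SL[starRingEnd 𝕂] 𝕂))
    (c : ℝ) (hc : 0 < c)
    (hinfsup : ∀ v : V, c * ‖v‖ ≤ ‖a₁ v‖)
    (hnondeg : ∀ w : V, (∀ v : V, a₁ v w = 0) → w = 0)
    (d : H →L[𝕂] (V →SL[starRingEnd 𝕂] 𝕂)) :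
    (∀ (x : H) (φ₁ φ₂ : H →SL[starRingEnd 𝕂] 𝕂),
        (∃ u : V, x = j u ∧ ∀ v : V, a₁ u v + d (j u) v = φ₁ (j v)) →
        (∃ u : V, x = j u ∧ ∀ v : V, a₁ u v + d (j u) v = φ₂ (j v)) → φ₁ = φ₂) ∧
    (∀ p q : H × (H →SL[starRingEnd 𝕂] 𝕂),
        p ∈ {p : H × (H →SL[starRingEnd 𝕂] 𝕂) |
              ∃ u : V, p.1 = j u ∧ ∀ v : V, a₁ u v + d (j u) v = p.2 (j v)} →
        q ∈ {p : H × (H →SL[starRingEnd 𝕂] 𝕂) |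
              ∃ u : V, p.1 = j u ∧ ∀ v : V, a₁ u v + d (j u) v = p.2 (j v)} →
        p + q ∈ {p : H × (H →SL[starRingEnd 𝕂] 𝕂) |
              ∃ u : V, p.1 = j u ∧ ∀ v : V, a₁ u v + d (j u) v = p.2 (j v)}) ∧
    (∀ (k : 𝕂) (p : H × (H →SL[starRingEnd 𝕂] 𝕂)),
        p ∈ {p : H × (H →SL[starRingEnd 𝕂] 𝕂) |
              ∃ u : V, p.1 = j u ∧ ∀ v : V, a₁ u v + d (j u) v = p.2 (j v)} →
        k • p ∈ {p : H × (H →SL[starRingEnd 𝕂] 𝕂) |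
              ∃ u : V, p.1 = j u ∧ ∀ v : V, a₁ u v + d (j u) v = p.2 (j v)}) ∧
    IsClosed {p : H × (H →SL[starRingEnd 𝕂] 𝕂) |
              ∃ u : V, p.1 = j u ∧ ∀ v : V, a₁ u v + d (j u) v = p.2 (j v)} :=
  operator_A_is_closed_linear_general j hj hjdense a₁ c hc hinfsup d
end

section
/- Assume W = V, V reflexive, j : V → H injective with dense range, and let a₁ be a bounded sesquilinear form on V × V with inf-sup constant c > 0, nondegenerate in the second component, with Lax–Milgram isomorphism T : V → V*. Let j* : H* → V* be ψ ↦ ψ∘j. Then for u ∈ V and φ ∈ H*: a₁(u,v) = φ(jv) for all v ∈ V if and only if Tu = j*φ. Consequently the operator A₁ := {(ju, φ) ∈ H × H* : u ∈ V, a₁(u,v) = φ(jv) for all v ∈ V} is a bijection from its domain onto H* with bounded inverse φ ↦ j(T⁻¹(j*φ)) ∈ L(H*, H), it is a closed operator from H to H*, and its domain {ju : u ∈ V, Tu ∈ ran(j*)} is dense in H. -/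
/-!
Since `a₁(u, ·) = Tu`, the graph of `A₁` is the graph of the bounded operator
`B = j ∘ T⁻¹ ∘ j*` (`solutionOperator`) read backwards, which gives the bounded inverse and closedness. The domain
of `A₁` is the range of `B`. By Hahn–Banach it suffices for density of `ran j*` in `V*` that
every functional on `V*` vanishing on it is zero; by reflexivity such a functional is evaluation
at some `v` with `ψ (j v) = 0` for all `ψ ∈ H*`, so `v = 0`. Passing through the continuous
surjection `T⁻¹` and the dense-range map `j` keeps the range dense.
-/

section

open Function NormedSpace

variable {𝕂 E F : Type*} [RCLike 𝕂] [NormedAddCommGroup E] [NormedSpace 𝕂 E]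
  [NormedAddCommGroup F] [NormedSpace 𝕂 F]

theorem ContinuousLinearMap.denseRange_of_forall_dual_comp_eq_zero (L : E →L[𝕂] F)
    (h : ∀ f : StrongDual 𝕂 F, f.comp L = 0 → f = 0) : DenseRange L := by
  set q := (LinearMap.range L.toLinearMap).topologicalClosure
  have : IsClosed (q : Set F) := Submodule.isClosed_topologicalClosure _
  rw [DenseRange, ← ContinuousLinearMap.coe_coe, ← LinearMap.coe_range,
    Submodule.dense_iff_topologicalClosure_eq_top, Submodule.eq_top_iff']
  by_contra! ⟨y, hy⟩
  have hne : q.mkQ y ≠ 0 := by rwa [Ne, Submodule.mkQ_apply, Submodule.Quotient.mk_eq_zero]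
  obtain ⟨g, -, hgy⟩ := exists_dual_vector 𝕂 (q.mkQ y) (norm_ne_zero_iff.2 hne)
  have hLq : ∀ x, q.mkQ (L x) = 0 := fun x =>
    (Submodule.Quotient.mk_eq_zero q).2 (Submodule.le_topologicalClosure _ ⟨x, rfl⟩)
  have hg : g.comp q.mkQL = 0 := h _ <| by
    ext x
    exact (congrArg g (hLq x)).trans (map_zero g)
  have hgy0 : g (q.mkQ y) = 0 := congr($hg y)
  exact hne (norm_eq_zero.1 (by exact_mod_cast hgy.symm.trans hgy0))

theorem denseRange_precomp_strongDual (hrefl : Surjective (inclusionInDoubleDual 𝕂 E))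
    (j : E →L[𝕂] F) (hj : Injective j) :
    DenseRange (ContinuousLinearMap.precomp 𝕂 j : StrongDual 𝕂 F →L[𝕂] StrongDual 𝕂 E) := by
  refine ContinuousLinearMap.denseRange_of_forall_dual_comp_eq_zero _ fun f hf => ?_
  obtain ⟨x, rfl⟩ := hrefl f
  have hjx : j x = 0 := SeparatingDual.eq_zero_of_forall_dual_eq_zero fun ψ => congr($hf ψ)
  rw [(injective_iff_map_eq_zero j).1 hj x hjx, map_zero]

variable (𝕂 E) in
noncomputable def conjDual : StrongDual 𝕂 E ≃SL[starRingEnd 𝕂] (E →SL[starRingEnd 𝕂] 𝕂) :=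
  (ContinuousLinearEquiv.refl 𝕂 E).arrowCongrSL (starL 𝕂)

@[simp] theorem conjDual_apply (f : StrongDual 𝕂 E) (x : E) : conjDual 𝕂 E f x = star (f x) := rfl

@[simp] theorem conjDual_symm_apply (f : E →SL[starRingEnd 𝕂] 𝕂) (x : E) :
    (conjDual 𝕂 E).symm f x = star (f x) := rfl

theorem denseRange_precomp_antidual (hrefl : Surjective (inclusionInDoubleDual 𝕂 E))
    (j : E →L[𝕂] F) (hj : Injective j) :
    DenseRange (ContinuousLinearMap.precomp 𝕂 j :
      (F →SL[starRingEnd 𝕂] 𝕂) →L[𝕂] (E →SL[starRingEnd 𝕂] 𝕂)) := by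
  have hconj : ⇑(ContinuousLinearMap.precomp 𝕂 j :
      (F →SL[starRingEnd 𝕂] 𝕂) →L[𝕂] (E →SL[starRingEnd 𝕂] 𝕂)) =
      conjDual 𝕂 E ∘ ContinuousLinearMap.precomp 𝕂 j ∘ (conjDual 𝕂 F).symm := by
    funext φ
    ext x
    simp
  rw [hconj]
  exact (conjDual 𝕂 E).surjective.denseRange.comp
    ((denseRange_precomp_strongDual hrefl j hj).comp (conjDual 𝕂 F).symm.surjective.denseRange
      (ContinuousLinearMap.continuous _)) (conjDual 𝕂 E).continuous

section FormOperator

variable {V H : Type*} [NormedAddCommGroup V] [NormedSpace 𝕂 V]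
  [NormedAddCommGroup H] [NormedSpace 𝕂 H]
  (j : V →L[𝕂] H) (a₁ : V →L[𝕂] (V →SL[starRingEnd 𝕂] 𝕂))
  (T : V ≃L[𝕂] (V →SL[starRingEnd 𝕂] 𝕂))

/-- The operator `A₁`, given by its graph in `H × H*`. -/
def formGraph : Set (H × (H →SL[starRingEnd 𝕂] 𝕂)) :=
  {p | ∃ u : V, p.1 = j u ∧ ∀ v : V, a₁ u v = p.2 (j v)}

noncomputable def solutionOperator : (H →SL[starRingEnd 𝕂] 𝕂) →L[𝕂] H :=
  j ∘L (T.symm : (V →SL[starRingEnd 𝕂] 𝕂) →L[𝕂] V) ∘L ContinuousLinearMap.precomp 𝕂 j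

variable {j a₁ T}

theorem forall_form_eq_iff (hT : ∀ v w : V, a₁ v w = T v w) (u : V)
    (φ : H →SL[starRingEnd 𝕂] 𝕂) :
    (∀ v : V, a₁ u v = φ (j v)) ↔ (T u : V →SL[starRingEnd 𝕂] 𝕂) = φ.comp j := by
  simp only [hT, ContinuousLinearMap.ext_iff, ContinuousLinearMap.comp_apply]

theorem mem_formGraph_iff (hT : ∀ v w : V, a₁ v w = T v w)
    (p : H × (H →SL[starRingEnd 𝕂] 𝕂)) :
    p ∈ formGraph j a₁ ↔ p.1 = solutionOperator j T p.2 := by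
  simp [formGraph, solutionOperator, forall_form_eq_iff hT, ← T.eq_symm_apply]

theorem formGraph_eq_setOf (hT : ∀ v w : V, a₁ v w = T v w) :
    formGraph j a₁ = {p | p.1 = solutionOperator j T p.2} :=
  Set.ext (mem_formGraph_iff hT)

theorem isClosed_formGraph (hT : ∀ v w : V, a₁ v w = T v w) : IsClosed (formGraph j a₁) := by
  rw [formGraph_eq_setOf hT]
  exact isClosed_eq continuous_fst ((solutionOperator j T).continuous.comp continuous_snd)

theorem fst_image_formGraph (hT : ∀ v w : V, a₁ v w = T v w) :
    Prod.fst '' formGraph j a₁ = Set.range (solutionOperator j T) := by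
  ext x
  simp [mem_formGraph_iff hT, eq_comm]

theorem denseRange_solutionOperator (hrefl : Surjective (inclusionInDoubleDual 𝕂 V))
    (hj : Injective j) (hjdense : DenseRange j) : DenseRange (solutionOperator j T) :=
  (hjdense.comp T.symm.surjective.denseRange j.continuous).comp
    (denseRange_precomp_antidual hrefl j hj) (j.continuous.comp T.symm.continuous)

end FormOperator

end

theorem operator_A1_properties_general
    {𝕂 V H : Type*} [RCLike 𝕂]
    [NormedAddCommGroup V] [NormedSpace 𝕂 V]
    [NormedAddCommGroup H] [NormedSpace 𝕂 H]
    (hrefl : Function.Surjective ⇑(NormedSpace.inclusionInDoubleDual 𝕂 V))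
    (j : V →L[𝕂] H) (hj : Function.Injective ⇑j) (hjdense : DenseRange ⇑j)
    (a₁ : V →L[𝕂] (V →SL[starRingEnd 𝕂] 𝕂))
    (T : V ≃L[𝕂] (V →SL[starRingEnd 𝕂] 𝕂))
    (hT : ∀ v w : V, a₁ v w = T v w) :
    (∀ (u : V) (φ : H →SL[starRingEnd 𝕂] 𝕂),
        (∀ v : V, a₁ u v = φ (j v)) ↔ (T u : V →SL[starRingEnd 𝕂] 𝕂) = φ.comp j) ∧
    (∀ p ∈ {p : H × (H →SL[starRingEnd 𝕂] 𝕂) |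
              ∃ u : V, p.1 = j u ∧ ∀ v : V, a₁ u v = p.2 (j v)},
        p.1 = j (T.symm (p.2.comp j))) ∧
    (∀ φ : H →SL[starRingEnd 𝕂] 𝕂,
        (j (T.symm (φ.comp j)), φ) ∈ {p : H × (H →SL[starRingEnd 𝕂] 𝕂) |
              ∃ u : V, p.1 = j u ∧ ∀ v : V, a₁ u v = p.2 (j v)}) ∧
    (∃ B : (H →SL[starRingEnd 𝕂] 𝕂) →L[𝕂] H,
        ∀ φ : H →SL[starRingEnd 𝕂] 𝕂, B φ = j (T.symm (φ.comp j))) ∧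
    IsClosed {p : H × (H →SL[starRingEnd 𝕂] 𝕂) |
              ∃ u : V, p.1 = j u ∧ ∀ v : V, a₁ u v = p.2 (j v)} ∧
    Dense (Prod.fst '' {p : H × (H →SL[starRingEnd 𝕂] 𝕂) |
              ∃ u : V, p.1 = j u ∧ ∀ v : V, a₁ u v = p.2 (j v)}) := by
  refine ⟨forall_form_eq_iff hT, fun p hp => (mem_formGraph_iff hT p).1 hp,
    fun φ => (mem_formGraph_iff hT _).2 rfl, ⟨solutionOperator j T, fun _ => rfl⟩,
    isClosed_formGraph hT, ?_⟩
  change Dense (Prod.fst '' formGraph j a₁)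
  rw [fst_image_formGraph hT]
  exact denseRange_solutionOperator hrefl hj hjdense

/-- Theorem 3.8 c): with `W = V` reflexive and `j : V → H` injective with dense range,
`A₁ = (j*)⁻¹ ∘ T` holds, i.e. `a₁(u,v) = φ(jv)` for all `v` iff `Tu = j*φ`;
the operator `A₁ = {(ju,φ) : a₁(u,v) = φ(jv) ∀v}` is a bijection onto `H*` with bounded
inverse `φ ↦ j(T⁻¹(j*φ))`, it is closed, and it is densely defined. -/
theorem operator_A1_properties
    {𝕂 V H : Type*} [RCLike 𝕂]
    [NormedAddCommGroup V] [NormedSpace 𝕂 V] [CompleteSpace V] [Nontrivial V]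
    [NormedAddCommGroup H] [NormedSpace 𝕂 H] [CompleteSpace H]
    (hrefl : Function.Surjective ⇑(NormedSpace.inclusionInDoubleDual 𝕂 V))
    (j : V →L[𝕂] H) (hj : Function.Injective ⇑j) (hjdense : DenseRange ⇑j)
    (a₁ : V →L[𝕂] (V →SL[starRingEnd 𝕂] 𝕂))
    (c : ℝ) (hc : 0 < c)
    (hinfsup : ∀ v : V, c * ‖v‖ ≤ ‖a₁ v‖)
    (hnondeg : ∀ w : V, (∀ v : V, a₁ v w = 0) → w = 0)
    (T : V ≃L[𝕂] (V →SL[starRingEnd 𝕂] 𝕂))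
    (hT : ∀ v w : V, a₁ v w = T v w) :
    (∀ (u : V) (φ : H →SL[starRingEnd 𝕂] 𝕂),
        (∀ v : V, a₁ u v = φ (j v)) ↔ (T u : V →SL[starRingEnd 𝕂] 𝕂) = φ.comp j) ∧
    (∀ p ∈ {p : H × (H →SL[starRingEnd 𝕂] 𝕂) |
              ∃ u : V, p.1 = j u ∧ ∀ v : V, a₁ u v = p.2 (j v)},
        p.1 = j (T.symm (p.2.comp j))) ∧
    (∀ φ : H →SL[starRingEnd 𝕂] 𝕂,
        (j (T.symm (φ.comp j)), φ) ∈ {p : H × (H →SL[starRingEnd 𝕂] 𝕂) |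
              ∃ u : V, p.1 = j u ∧ ∀ v : V, a₁ u v = p.2 (j v)}) ∧
    (∃ B : (H →SL[starRingEnd 𝕂] 𝕂) →L[𝕂] H,
        ∀ φ : H →SL[starRingEnd 𝕂] 𝕂, B φ = j (T.symm (φ.comp j))) ∧
    IsClosed {p : H × (H →SL[starRingEnd 𝕂] 𝕂) |
              ∃ u : V, p.1 = j u ∧ ∀ v : V, a₁ u v = p.2 (j v)} ∧
    Dense (Prod.fst '' {p : H × (H →SL[starRingEnd 𝕂] 𝕂) |
              ∃ u : V, p.1 = j u ∧ ∀ v : V, a₁ u v = p.2 (j v)}) :=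
  operator_A1_properties_general hrefl j hj hjdense a₁ T hT
end

section
/- Assume W = V, V reflexive, j : V → H injective with dense range, a₁ a bounded sesquilinear form on V × V with inf-sup constant c > 0 and nondegenerate in the second component, d a bounded sesquilinear form on H × V, C̃ : H → V the unique bounded operator with a₁(C̃x,w) = d(x,w), and C^V := C̃∘j. Then: (i) for every u ∈ V, a₁(u,v) + d(ju,v) = 0 for all v ∈ V if and only if (I_V + C^V)u = 0; (ii) for every u ∈ V and φ ∈ H*, a₁(u,v) + d(ju,v) = φ(jv) for all v ∈ V if and only if a₁((I_V + C^V)u, v) = φ(jv) for all v ∈ V (the factorization A = A₁(I_V + C^V)). -/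
/-- Theorem 3.8 d), e): with `W = V` reflexive and `j : V → H` injective with dense
range: (i) `ker(A) = ker(I_V + C^V)`, i.e. `u` solves the homogeneous problem iff
`(I_V + C^V)u = 0`; (ii) the factorisation `A = A₁(I_V + C^V)`: `u` solves the problem
with datum `φ ∈ H*` iff `(I_V + C^V)u` solves the corresponding problem for `a₁`. -/
theorem factorisation_A_eq_A1_comp
    {𝕂 V H : Type*} [RCLike 𝕂]
    [NormedAddCommGroup V] [NormedSpace 𝕂 V] [CompleteSpace V] [Nontrivial V]
    [NormedAddCommGroup H] [NormedSpace 𝕂 H] [CompleteSpace H]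
    (hrefl : Function.Surjective ⇑(NormedSpace.inclusionInDoubleDual 𝕂 V))
    (j : V →L[𝕂] H) (hj : Function.Injective ⇑j) (hjdense : DenseRange ⇑j)
    (a₁ : V →L[𝕂] (V →SL[starRingEnd 𝕂] 𝕂))
    (c : ℝ) (hc : 0 < c)
    (hinfsup : ∀ v : V, c * ‖v‖ ≤ ‖a₁ v‖)
    (hnondeg : ∀ w : V, (∀ v : V, a₁ v w = 0) → w = 0)
    (d : H →L[𝕂] (V →SL[starRingEnd 𝕂] 𝕂))
    (Ct : H →L[𝕂] V)
    (hCt : ∀ (x : H) (w : V), a₁ (Ct x) w = d x w) :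
    (∀ u : V, (∀ v : V, a₁ u v + d (j u) v = 0) ↔ u + Ct (j u) = 0) ∧
    (∀ (u : V) (φ : H →SL[starRingEnd 𝕂] 𝕂),
        (∀ v : V, a₁ u v + d (j u) v = φ (j v)) ↔
        (∀ v : V, a₁ (u + Ct (j u)) v = φ (j v))) := by
  have key : ∀ (u v : V), a₁ (u + Ct (j u)) v = a₁ u v + d (j u) v := by
    intro u v
    rw [map_add]
    simp [hCt]
  have hinj : ∀ x : V, (∀ v : V, a₁ x v = 0) → x = 0 := by
    intro x hx
    have h1 : a₁ x = 0 := by ext v; simpa using hx v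
    have h2 : c * ‖x‖ ≤ 0 := by simpa [h1] using hinfsup x
    have h3 : ‖x‖ ≤ 0 := nonpos_of_mul_nonpos_left (by linarith [norm_nonneg x, mul_nonneg hc.le (norm_nonneg x)]) hc
    exact norm_le_zero_iff.mp h3
  constructor
  · intro u
    constructor
    · intro h
      apply hinj
      intro v
      rw [key]
      exact h v
    · intro h v
      rw [← key, h]
      simp
  · intro u φ
    constructor
    · intro h v; rw [key]; exact h v
    · intro h v; rw [← key]; exact h v
end

section
/- Assume W = V, V reflexive, j : V → H injective with dense range, a₁ a bounded sesquilinear form on V × V with inf-sup constant c > 0 and nondegenerate in the second component with Lax–Milgram isomorphism T : V → V*, d a bounded sesquilinear form on H × V with associated operator C^V = C̃∘j ∈ L(V), and j* : H* → V*, ψ ↦ ψ∘j. The following are equivalent: (i) for every φ ∈ H* there exists exactly one u ∈ V with a₁(u,v) + d(ju,v) = φ(jv) for all v ∈ V (H-well-posedness); (ii) the operator A := {(ju,φ) ∈ H × H* : u ∈ V, a₁(u,v) + d(ju,v) = φ(jv) for all v} is a bijection from its domain onto H*; (iii) I_V + C^V is injective and ran(j*) ⊆ ran(T∘(I_V + C^V)).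 In that case the solution map H* → H, φ ↦ ju_φ, is a bounded linear operator. -/
/-- Theorem 3.8 f): with `W = V` reflexive and `j : V → H` injective with dense range,
the following are equivalent: (i) H-well-posedness; (ii) the operator `A` is a
bijection from its domain onto `H*`; (iii) `I_V + C^V` is injective and
`ran(j*) ⊆ ran(T∘(I_V + C^V))`. In that case the solution operator is bounded. -/
theorem H_well_posedness_characterisation
    {𝕂 V H : Type*} [RCLike 𝕂]
    [NormedAddCommGroup V] [NormedSpace 𝕂 V] [CompleteSpace V] [Nontrivial V]
    [NormedAddCommGroup H] [NormedSpace 𝕂 H] [CompleteSpace H]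
    (hrefl : Function.Surjective ⇑(NormedSpace.inclusionInDoubleDual 𝕂 V))
    (j : V →L[𝕂] H) (hj : Function.Injective ⇑j) (hjdense : DenseRange ⇑j)
    (a₁ : V →L[𝕂] (V →SL[starRingEnd 𝕂] 𝕂))
    (c : ℝ) (hc : 0 < c)
    (hinfsup : ∀ v : V, c * ‖v‖ ≤ ‖a₁ v‖)
    (hnondeg : ∀ w : V, (∀ v : V, a₁ v w = 0) → w = 0)
    (T : V ≃L[𝕂] (V →SL[starRingEnd 𝕂] 𝕂))
    (hT : ∀ v w : V, a₁ v w = T v w)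
    (d : H →L[𝕂] (V →SL[starRingEnd 𝕂] 𝕂))
    (Ct : H →L[𝕂] V)
    (hCt : ∀ (x : H) (w : V), a₁ (Ct x) w = d x w) :
    ((∀ φ : H →SL[starRingEnd 𝕂] 𝕂,
        ∃! u : V, ∀ v : V, a₁ u v + d (j u) v = φ (j v)) ↔
      (∀ φ : H →SL[starRingEnd 𝕂] 𝕂,
        ∃! x : H, ∃ u : V, x = j u ∧ ∀ v : V, a₁ u v + d (j u) v = φ (j v))) ∧
    ((∀ φ : H →SL[starRingEnd 𝕂] 𝕂,
        ∃! x : H, ∃ u : V, x = j u ∧ ∀ v : V, a₁ u v + d (j u) v = φ (j v)) ↔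
      (Function.Injective (fun u : V => u + Ct (j u)) ∧
        ∀ ψ : H →SL[starRingEnd 𝕂] 𝕂,
          ∃ u : V, (T (u + Ct (j u)) : V →SL[starRingEnd 𝕂] 𝕂) = ψ.comp j)) ∧
    ((∀ φ : H →SL[starRingEnd 𝕂] 𝕂,
        ∃! u : V, ∀ v : V, a₁ u v + d (j u) v = φ (j v)) →
      ∃ B : (H →SL[starRingEnd 𝕂] 𝕂) →L[𝕂] H,
        ∀ φ : H →SL[starRingEnd 𝕂] 𝕂,
          ∃ u : V, B φ = j u ∧ ∀ v : V, a₁ u v + d (j u) v = φ (j v)) := by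
  classical
  -- the operator S = I + C^V
  set S : V →L[𝕂] V := ContinuousLinearMap.id 𝕂 V + Ct.comp j with hSdef
  have hS : ∀ u : V, S u = u + Ct (j u) := fun u => rfl
  -- pointwise identity
  have hfun : ∀ (u v : V), (T (u + Ct (j u)) : V →SL[starRingEnd 𝕂] 𝕂) v
      = a₁ u v + d (j u) v := by
    intro u v
    rw [← hT, map_add, ContinuousLinearMap.add_apply, hCt]
  -- key reformulation of the equation
  have key : ∀ (u : V) (φ : H →SL[starRingEnd 𝕂] 𝕂),
      (∀ v : V, a₁ u v + d (j u) v = φ (j v)) ↔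
      (T (u + Ct (j u)) : V →SL[starRingEnd 𝕂] 𝕂) = φ.comp j := by
    intro u φ
    constructor
    · intro h
      ext v
      rw [hfun u v, ContinuousLinearMap.comp_apply]
      exact h v
    · intro h v
      rw [← hfun u v, h, ContinuousLinearMap.comp_apply]
  -- (i) ↔ (ii)
  have part1 : (∀ φ : H →SL[starRingEnd 𝕂] 𝕂,
        ∃! u : V, ∀ v : V, a₁ u v + d (j u) v = φ (j v)) ↔
      (∀ φ : H →SL[starRingEnd 𝕂] 𝕂,
        ∃! x : H, ∃ u : V, x = j u ∧ ∀ v : V, a₁ u v + d (j u) v = φ (j v)) := by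
    constructor
    · intro h φ
      obtain ⟨u, hu, huniq⟩ := h φ
      refine ⟨j u, ⟨u, rfl, hu⟩, ?_⟩
      rintro x ⟨u', rfl, hu'⟩
      rw [huniq u' hu']
    · intro h φ
      obtain ⟨x, ⟨u, hx, hu⟩, huniq⟩ := h φ
      refine ⟨u, hu, ?_⟩
      intro u' hu'
      apply hj
      rw [huniq (j u') ⟨u', rfl, hu'⟩, hx]
  -- (i) ↔ (iii)
  have part13 : (∀ φ : H →SL[starRingEnd 𝕂] 𝕂,
        ∃! u : V, ∀ v : V, a₁ u v + d (j u) v = φ (j v)) ↔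
      (Function.Injective (fun u : V => u + Ct (j u)) ∧
        ∀ ψ : H →SL[starRingEnd 𝕂] 𝕂,
          ∃ u : V, (T (u + Ct (j u)) : V →SL[starRingEnd 𝕂] 𝕂) = ψ.comp j) := by
    constructor
    · intro h
      constructor
      · -- injectivity of S from uniqueness at φ = 0
        intro u₁ u₂ he
        obtain ⟨u₀, hu₀, huniq⟩ := h 0
        have hsub : (T ((u₁ - u₂) + Ct (j (u₁ - u₂))) : V →SL[starRingEnd 𝕂] 𝕂)
            = (0 : H →SL[starRingEnd 𝕂] 𝕂).comp j := by
          have : S (u₁ - u₂) = 0 := by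
            rw [map_sub, hS, hS]
            simp only at he
            rw [he]
            abel
          rw [← hS, this]
          ext v
          simp [← hT]
        have h1 : u₁ - u₂ = u₀ := huniq _ ((key (u₁ - u₂) 0).mpr hsub)
        have h0 : (0 : V) = u₀ := by
          apply huniq
          apply (key 0 0).mpr
          ext v
          simp [← hT]
        have : u₁ - u₂ = 0 := h1.trans h0.symm
        exact sub_eq_zero.mp this
      · intro ψ
        obtain ⟨u, hu, _⟩ := h ψ
        exact ⟨u, (key u ψ).mp hu⟩
    · rintro ⟨hinj, hsurj⟩ φ
      obtain ⟨u, hu⟩ := hsurj φ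
      refine ⟨u, (key u φ).mpr hu, ?_⟩
      intro u' hu'
      have := (key u' φ).mp hu'
      have hTe : (T (u' + Ct (j u')) : V →SL[starRingEnd 𝕂] 𝕂)
          = T (u + Ct (j u)) := by rw [this, hu]
      exact hinj (T.injective hTe)
  refine ⟨part1, part1.symm.trans part13, ?_⟩
  -- boundedness of the solution operator via the closed graph theorem
  intro hi
  -- T ∘ S as a continuous map
  have hTS_cont : Continuous fun w : V => (T (S w) : V →SL[starRingEnd 𝕂] 𝕂) :=
    T.continuous.comp S.continuous
  -- the solution map, as a function
  let sol : (H →SL[starRingEnd 𝕂] 𝕂) → V := fun φ => (hi φ).choose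
  have hsol : ∀ φ, (T (S (sol φ)) : V →SL[starRingEnd 𝕂] 𝕂) = φ.comp j := by
    intro φ
    rw [hS]
    exact (key _ φ).mp (hi φ).choose_spec.1
  have hsol_uniq : ∀ (φ) (u : V),
      (T (S u) : V →SL[starRingEnd 𝕂] 𝕂) = φ.comp j → u = sol φ := by
    intro φ u hu
    exact (hi φ).choose_spec.2 u ((key u φ).mpr (by rw [← hS]; exact hu))
  -- linearity
  let L : (H →SL[starRingEnd 𝕂] 𝕂) →ₗ[𝕂] V :=
    { toFun := sol
      map_add' := by
        intro φ ψ
        refine (hsol_uniq (φ + ψ) (sol φ + sol ψ) ?_).symm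
        rw [map_add, map_add, hsol, hsol]
        ext v
        simp
      map_smul' := by
        intro m φ
        refine (hsol_uniq (m • φ) (m • sol φ) ?_).symm
        rw [map_smul, map_smul, hsol]
        ext v
        simp }
  -- continuity of precomposition with j
  have hcomp_lip : LipschitzWith ‖j‖₊ (fun ψ : H →SL[starRingEnd 𝕂] 𝕂 => ψ.comp j) := by
    apply LipschitzWith.of_dist_le_mul
    intro φ ψ
    rw [dist_eq_norm, dist_eq_norm, ← ContinuousLinearMap.sub_comp]
    calc ‖(φ - ψ).comp j‖ ≤ ‖φ - ψ‖ * ‖j‖ := ContinuousLinearMap.opNorm_comp_le _ _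
      _ = ‖j‖₊ * ‖φ - ψ‖ := by rw [mul_comm]; rfl
  -- closed graph
  have hLcont : Continuous L := by
    apply L.continuous_of_seq_closed_graph
    intro u x y hu hLu
    have h1 : Filter.Tendsto (fun n => (T (S (L (u n))) : V →SL[starRingEnd 𝕂] 𝕂))
        Filter.atTop (nhds (T (S y))) := (hTS_cont.tendsto y).comp hLu
    have h2 : Filter.Tendsto (fun n => (u n).comp j)
        Filter.atTop (nhds (x.comp j)) := (hcomp_lip.continuous.tendsto x).comp hu
    have heq : (fun n => (T (S (L (u n))) : V →SL[starRingEnd 𝕂] 𝕂))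
        = fun n => (u n).comp j := by
      funext n
      exact hsol (u n)
    rw [heq] at h1
    have : (T (S y) : V →SL[starRingEnd 𝕂] 𝕂) = x.comp j := tendsto_nhds_unique h1 h2
    exact hsol_uniq x y this
  let Lc : (H →SL[starRingEnd 𝕂] 𝕂) →L[𝕂] V := ⟨L, hLcont⟩
  refine ⟨j.comp Lc, ?_⟩
  intro φ
  exact ⟨sol φ, rfl, (hi φ).choose_spec.1⟩
end

section
/- Let a₁ be a bounded sesquilinear form on V × W with inf-sup constant c > 0 and nondegenerate in the second component, let 𝒢 ⊆ X be nonempty and open, let 𝔠 : 𝒢 → S(H × W, 𝕂) and Φ : 𝒢 → W* be maps, and assume that for every m ∈ 𝒢 and every φ ∈ W* there is exactly one u ∈ V with a₁(u,w) + 𝔠(m)(ju,w) = φ(w) for all w ∈ W (strong well-posedness). Let S : 𝒢 → V be the parameter-to-state map, where S(m) is the unique u ∈ V with a₁(u,w) + 𝔠(m)(ju,w) = Φ(m)(w) for all w ∈ W. If Φ and 𝔠 are n-times continuously Fréchet differentiable on 𝒢 for some n ∈ ℕ ∪ {∞}, then S is n-times continuously Fréchet differentiable on 𝒢. -/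
namespace ContinuousLinearMap

variable {𝕜 E F X : Type*} [NontriviallyNormedField 𝕜]
  [NormedAddCommGroup E] [NormedSpace 𝕜 E] [CompleteSpace E]
  [NormedAddCommGroup F] [NormedSpace 𝕜 F]
  [NormedAddCommGroup X] [NormedSpace 𝕜 X]

theorem isInvertible_of_bijective [CompleteSpace F] {T : E →L[𝕜] F}
    (hT : Function.Bijective T) : T.IsInvertible :=
  ⟨.ofBijective T (LinearMap.ker_eq_bot.mpr hT.1) (LinearMap.range_eq_top.mpr hT.2), rfl⟩

theorem contDiffOn_of_apply_eq {n : ℕ∞} {s : Set X} {T : X → E →L[𝕜] F} {b : X → F} {u : X → E}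
    (hT : ContDiffOn 𝕜 n T s) (hb : ContDiffOn 𝕜 n b s) (hinv : ∀ x ∈ s, (T x).IsInvertible)
    (hu : ∀ x ∈ s, T x (u x) = b x) : ContDiffOn 𝕜 n u s := by
  have hsolve : ∀ x ∈ s, u x = (T x).inverse (b x) := fun x hx =>
    ((hinv x hx).inverse_apply_eq.mpr (hu x hx).symm).symm
  refine ContDiffOn.congr (fun x hx => ?_) hsolve
  obtain ⟨e, he⟩ := hinv x hx
  have hinverse : ContDiffAt 𝕜 n inverse (T x) := he ▸ contDiffAt_map_inverse e
  exact (hinverse.comp_contDiffWithinAt x (hT x hx)).clm_apply (hb x hx)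

end ContinuousLinearMap

theorem parameter_to_state_contDiff_general
    {𝕂 V W H X : Type*} [RCLike 𝕂]
    [NormedAddCommGroup V] [NormedSpace 𝕂 V] [CompleteSpace V]
    [NormedAddCommGroup W] [NormedSpace 𝕂 W]
    [NormedAddCommGroup H] [NormedSpace 𝕂 H]
    [NormedAddCommGroup X] [NormedSpace 𝕂 X]
    (j : V →L[𝕂] H)
    (a₁ : V →L[𝕂] (W →SL[starRingEnd 𝕂] 𝕂))
    (𝒢 : Set X)
    (𝔠 : X → (H →L[𝕂] (W →SL[starRingEnd 𝕂] 𝕂)))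
    (Φ : X → (W →SL[starRingEnd 𝕂] 𝕂))
    (hwp : ∀ m ∈ 𝒢, ∀ φ : W →SL[starRingEnd 𝕂] 𝕂,
      ∃! u : V, ∀ w : W, a₁ u w + 𝔠 m (j u) w = φ w)
    (S : X → V)
    (hS : ∀ m ∈ 𝒢, ∀ w : W, a₁ (S m) w + 𝔠 m (j (S m)) w = Φ m w)
    (n : ℕ∞)
    (hΦ : ContDiffOn 𝕂 n Φ 𝒢) (h𝔠 : ContDiffOn 𝕂 n 𝔠 𝒢) :
    ContDiffOn 𝕂 n S 𝒢 := by
  set T : X → V →L[𝕂] (W →SL[starRingEnd 𝕂] 𝕂) := fun m => a₁ + (𝔠 m).comp j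
  have hT : ContDiffOn 𝕂 n T 𝒢 := contDiffOn_const.add (h𝔠.clm_comp contDiffOn_const)
  have hbij : ∀ m ∈ 𝒢, Function.Bijective (T m) := fun m hm =>
    (Function.bijective_iff_existsUnique _).mpr fun φ => by
      simpa only [T, ContinuousLinearMap.ext_iff, add_apply,
        ContinuousLinearMap.comp_apply] using hwp m hm φ
  exact ContinuousLinearMap.contDiffOn_of_apply_eq hT hΦ
    (fun m hm => ContinuousLinearMap.isInvertible_of_bijective (hbij m hm))
    (fun m hm => ContinuousLinearMap.ext (hS m hm))

/-- Theorem 5.1 a): if the data maps `Φ : 𝒢 → W*` and `𝔠 : 𝒢 → S(H×W,𝕂)` are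
`n`-times continuously Fréchet differentiable and the variational problem is strongly
well-posed for every `m ∈ 𝒢`, then the parameter-to-state operator `S` is `n`-times
continuously Fréchet differentiable on `𝒢`. -/
theorem parameter_to_state_contDiff
    {𝕂 V W H X : Type*} [RCLike 𝕂]
    [NormedAddCommGroup V] [NormedSpace 𝕂 V] [CompleteSpace V]
    [NormedAddCommGroup W] [NormedSpace 𝕂 W] [CompleteSpace W] [Nontrivial W]
    [NormedAddCommGroup H] [NormedSpace 𝕂 H] [CompleteSpace H]
    [NormedAddCommGroup X] [NormedSpace 𝕂 X] [CompleteSpace X]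
    (hrefl : Function.Surjective ⇑(NormedSpace.inclusionInDoubleDual 𝕂 W))
    (j : V →L[𝕂] H) (hj : Function.Injective ⇑j)
    (a₁ : V →L[𝕂] (W →SL[starRingEnd 𝕂] 𝕂))
    (c : ℝ) (hc : 0 < c)
    (hinfsup : ∀ v : V, c * ‖v‖ ≤ ‖a₁ v‖)
    (hnondeg : ∀ w : W, (∀ v : V, a₁ v w = 0) → w = 0)
    (𝒢 : Set X) (h𝒢open : IsOpen 𝒢) (h𝒢ne : 𝒢.Nonempty)
    (𝔠 : X → (H →L[𝕂] (W →SL[starRingEnd 𝕂] 𝕂)))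
    (Φ : X → (W →SL[starRingEnd 𝕂] 𝕂))
    (hwp : ∀ m ∈ 𝒢, ∀ φ : W →SL[starRingEnd 𝕂] 𝕂,
      ∃! u : V, ∀ w : W, a₁ u w + 𝔠 m (j u) w = φ w)
    (S : X → V)
    (hS : ∀ m ∈ 𝒢, ∀ w : W, a₁ (S m) w + 𝔠 m (j (S m)) w = Φ m w)
    (n : ℕ∞)
    (hΦ : ContDiffOn 𝕂 n Φ 𝒢) (h𝔠 : ContDiffOn 𝕂 n 𝔠 𝒢) :
    ContDiffOn 𝕂 n S 𝒢 :=
  parameter_to_state_contDiff_general j a₁ 𝒢 𝔠 Φ hwp S hS n hΦ h𝔠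
end

section
/- Let a₁ be a bounded sesquilinear form on V × W with inf-sup constant c > 0 and nondegenerate in the second component, let 𝒢 ⊆ X be nonempty and open, let 𝔠 : 𝒢 → S(H × W, 𝕂) and Φ : 𝒢 → W*, and assume strong well-posedness for every m ∈ 𝒢 (for each φ ∈ W* there is exactly one u ∈ V with a₁(u,w) + 𝔠(m)(ju,w) = φ(w) for all w ∈ W). Let S : 𝒢 → V be defined by: S(m) is the unique u ∈ V with a₁(u,w) + 𝔠(m)(ju,w) = Φ(m)(w) for all w ∈ W. If Φ and 𝔠 are analytic on 𝒢 (locally given by their Taylor series expansions), then S is analytic on 𝒢. -/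
/-!
On `𝒢` the state is `S m = A(m)⁻¹ (Φ m)` for the operator `A(m) = a₁ + 𝔠(m) ∘ j : V → W*`.
Well-posedness makes `A(m)` bijective, hence an isomorphism of Banach spaces by the open mapping
theorem. The map `m ↦ A(m)` is analytic because it is affine in `𝔠 m`, and inversion is analytic
near any isomorphism (a Neumann series), so `S` is analytic.
-/

open ContinuousLinearMap

section

variable {𝕜 : Type*} [NontriviallyNormedField 𝕜]
  {E F X : Type*} [NormedAddCommGroup E] [NormedSpace 𝕜 E]
  [NormedAddCommGroup F] [NormedSpace 𝕜 F] [NormedAddCommGroup X] [NormedSpace 𝕜 X]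

theorem analyticAt_map_inverse [CompleteSpace E] (e : E ≃L[𝕜] F) :
    AnalyticAt 𝕜 inverse (e : E →L[𝕜] F) := by
  let O₁ : (E →L[𝕜] E) →L[𝕜] F →L[𝕜] E := (compL 𝕜 F E E).flip e.symm
  let O₂ : (E →L[𝕜] F) →L[𝕜] E →L[𝕜] E := compL 𝕜 E F E e.symm
  have hO : inverse = O₁ ∘ Ring.inverse ∘ O₂ := funext (inverse_eq_ringInverse e)
  have hO₂e : O₂ e = ((1 : (E →L[𝕜] E)ˣ) : E →L[𝕜] E) := by ext; simp [O₂]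
  rw [hO]
  refine O₁.analyticAt _ |>.comp (AnalyticAt.comp ?_ (O₂.analyticAt _))
  rw [hO₂e]
  exact analyticAt_inverse _

theorem AnalyticAt.clm_inverse_apply [CompleteSpace E] {f : X → E →L[𝕜] F} {g : X → F} {x : X}
    (hf : AnalyticAt 𝕜 f x) (hg : AnalyticAt 𝕜 g x) (hfx : (f x).IsInvertible) :
    AnalyticAt 𝕜 (fun y ↦ (f y).inverse (g y)) x := by
  obtain ⟨e, he⟩ := hfx
  have hinv : AnalyticAt 𝕜 (fun y ↦ (f y).inverse) x :=
    (he ▸ analyticAt_map_inverse e).comp hf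
  exact (apply 𝕜 E |>.flip).analyticAt_bilinear _ |>.comp₂ hinv hg

theorem AnalyticAt.clm_comp_const {G : Type*} [NormedAddCommGroup G] [NormedSpace 𝕜 G]
    {g : X → F →L[𝕜] G} {x : X} (hg : AnalyticAt 𝕜 g x) (j : E →L[𝕜] F) :
    AnalyticAt 𝕜 (fun y ↦ (g y).comp j) x :=
  ((compL 𝕜 E F G).flip j).analyticAt (g x) |>.comp hg

theorem ContinuousLinearMap.isInvertible_of_bijective_s15 [CompleteSpace E] [CompleteSpace F]
    {f : E →L[𝕜] F} (hf : Function.Bijective f) : f.IsInvertible :=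
  ⟨ContinuousLinearEquiv.ofBijective f (LinearMap.ker_eq_bot.mpr hf.1)
    (LinearMap.range_eq_top.mpr hf.2), rfl⟩

end

theorem parameter_to_state_analytic_general
    {𝕂 V W H X : Type*} [RCLike 𝕂]
    [NormedAddCommGroup V] [NormedSpace 𝕂 V] [CompleteSpace V]
    [NormedAddCommGroup W] [NormedSpace 𝕂 W]
    [NormedAddCommGroup H] [NormedSpace 𝕂 H]
    [NormedAddCommGroup X] [NormedSpace 𝕂 X]
    (j : V →L[𝕂] H)
    (a₁ : V →L[𝕂] (W →SL[starRingEnd 𝕂] 𝕂))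
    (𝒢 : Set X) (h𝒢open : IsOpen 𝒢)
    (𝔠 : X → (H →L[𝕂] (W →SL[starRingEnd 𝕂] 𝕂)))
    (Φ : X → (W →SL[starRingEnd 𝕂] 𝕂))
    (hwp : ∀ m ∈ 𝒢, ∀ φ : W →SL[starRingEnd 𝕂] 𝕂,
      ∃! u : V, ∀ w : W, a₁ u w + 𝔠 m (j u) w = φ w)
    (S : X → V)
    (hS : ∀ m ∈ 𝒢, ∀ w : W, a₁ (S m) w + 𝔠 m (j (S m)) w = Φ m w)
    (hΦ : AnalyticOnNhd 𝕂 Φ 𝒢) (h𝔠 : AnalyticOnNhd 𝕂 𝔠 𝒢) :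
    AnalyticOnNhd 𝕂 S 𝒢 := by
  let A : X → V →L[𝕂] (W →SL[starRingEnd 𝕂] 𝕂) := fun m ↦ a₁ + (𝔠 m).comp j
  have hA_apply (m : X) (u : V) : A m u = a₁ u + 𝔠 m (j u) := rfl
  have hA : AnalyticOnNhd 𝕂 A 𝒢 := fun m hm ↦
    analyticAt_const.add <| (h𝔠 m hm).clm_comp_const j
  have hA_inv : ∀ m ∈ 𝒢, (A m).IsInvertible := fun m hm ↦ by
    refine isInvertible_of_bijective_s15 <| Function.bijective_iff_existsUnique _ |>.mpr fun φ ↦ ?_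
    simpa only [ContinuousLinearMap.ext_iff, hA_apply, add_apply] using hwp m hm φ
  have hS_eq : ∀ m ∈ 𝒢, S m = (A m).inverse (Φ m) := fun m hm ↦ by
    refine ((hA_inv m hm).inverse_apply_eq.mpr ?_).symm
    ext w
    exact (hS m hm w).symm
  intro m hm
  refine ((hA m hm).clm_inverse_apply (hΦ m hm) (hA_inv m hm)).congr ?_
  filter_upwards [h𝒢open.mem_nhds hm] with x hx
  exact (hS_eq x hx).symm

/-- Theorem 5.1 b): if the data maps `Φ` and `𝔠` are analytic on `𝒢` and the
variational problem is strongly well-posed for every `m ∈ 𝒢`, then the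
parameter-to-state operator `S` is analytic on `𝒢`. -/
theorem parameter_to_state_analytic
    {𝕂 V W H X : Type*} [RCLike 𝕂]
    [NormedAddCommGroup V] [NormedSpace 𝕂 V] [CompleteSpace V]
    [NormedAddCommGroup W] [NormedSpace 𝕂 W] [CompleteSpace W] [Nontrivial W]
    [NormedAddCommGroup H] [NormedSpace 𝕂 H] [CompleteSpace H]
    [NormedAddCommGroup X] [NormedSpace 𝕂 X] [CompleteSpace X]
    (hrefl : Function.Surjective ⇑(NormedSpace.inclusionInDoubleDual 𝕂 W))
    (j : V →L[𝕂] H) (hj : Function.Injective ⇑j)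
    (a₁ : V →L[𝕂] (W →SL[starRingEnd 𝕂] 𝕂))
    (c : ℝ) (hc : 0 < c)
    (hinfsup : ∀ v : V, c * ‖v‖ ≤ ‖a₁ v‖)
    (hnondeg : ∀ w : W, (∀ v : V, a₁ v w = 0) → w = 0)
    (𝒢 : Set X) (h𝒢open : IsOpen 𝒢) (h𝒢ne : 𝒢.Nonempty)
    (𝔠 : X → (H →L[𝕂] (W →SL[starRingEnd 𝕂] 𝕂)))
    (Φ : X → (W →SL[starRingEnd 𝕂] 𝕂))
    (hwp : ∀ m ∈ 𝒢, ∀ φ : W →SL[starRingEnd 𝕂] 𝕂,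
      ∃! u : V, ∀ w : W, a₁ u w + 𝔠 m (j u) w = φ w)
    (S : X → V)
    (hS : ∀ m ∈ 𝒢, ∀ w : W, a₁ (S m) w + 𝔠 m (j (S m)) w = Φ m w)
    (hΦ : AnalyticOnNhd 𝕂 Φ 𝒢) (h𝔠 : AnalyticOnNhd 𝕂 𝔠 𝒢) :
    AnalyticOnNhd 𝕂 S 𝒢 :=
  parameter_to_state_analytic_general j a₁ 𝒢 h𝒢open 𝔠 Φ hwp S hS hΦ h𝔠
end

section
/- Let Y be a Banach space over 𝕂, E ⊆ Y open, m a fixed parameter, and 𝒪 ⊆ E nonempty and open. Let 𝔞₁ : 𝒪 → S(V × W, 𝕂), 𝔠 : 𝒪 → S(H × W, 𝕂) and Φ : 𝒪 → W* be maps such that for each t ∈ 𝒪 the form 𝔞₁(t) satisfies the inf-sup condition with some constant c(t) > 0 and is nondegenerate in the second component, and such that for every t ∈ 𝒪 and φ ∈ W* there is exactly one u ∈ V with 𝔞₁(t)(u,w) + 𝔠(t)(ju,w) = φ(w) for all w ∈ W (strong well-posedness). Let τ : 𝒪 → V map t to the unique u ∈ V with 𝔞₁(t)(u,w) + 𝔠(t)(ju,w)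 = Φ(t)(w) for all w ∈ W. If Φ, 𝔞₁ and 𝔠 are n-times continuously Fréchet differentiable on 𝒪 for some n ∈ ℕ ∪ {∞}, then τ is n-times continuously Fréchet differentiable on 𝒪; if Φ, 𝔞₁ and 𝔠 are analytic on 𝒪, then τ is analytic on 𝒪. -/
/-!
Strong well-posedness says that `A t = 𝔞₁ t + 𝔠 t ∘ j : V → W*` is bijective, hence an
isomorphism by the open mapping theorem, and `τ t = (A t)⁻¹ (Φ t)`. Inversion of operators is
analytic on the isomorphisms, so `τ` inherits the regularity of `Φ`, `𝔞₁` and `𝔠`. On the open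
set `𝒪`, analyticity is `C^ω` regularity, so both claims are instances of one statement.
-/

open ContinuousLinearMap
open scoped ContDiff

section

variable {𝕜 E F Y : Type*} [NontriviallyNormedField 𝕜]
  [NormedAddCommGroup E] [NormedSpace 𝕜 E] [NormedAddCommGroup F] [NormedSpace 𝕜 F]
  [NormedAddCommGroup Y] [NormedSpace 𝕜 Y]

theorem ContinuousLinearMap.isInvertible_of_bijective_s17 [CompleteSpace E] [CompleteSpace F]
    {A : E →L[𝕜] F} (hA : Function.Bijective A) : A.IsInvertible :=
  ⟨.ofBijective A (LinearMap.ker_eq_bot.mpr hA.1) (LinearMap.range_eq_top.mpr hA.2), rfl⟩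

theorem contDiffOn_of_isInvertible_of_apply_eq [CompleteSpace E] {n : WithTop ℕ∞}
    {A : Y → E →L[𝕜] F} {f : Y → F} {u : Y → E} {s : Set Y}
    (hA : ContDiffOn 𝕜 n A s) (hf : ContDiffOn 𝕜 n f s)
    (hinv : ∀ t ∈ s, (A t).IsInvertible) (hu : ∀ t ∈ s, A t (u t) = f t) :
    ContDiffOn 𝕜 n u s := by
  have hsol : ContDiffOn 𝕜 n (fun t ↦ (A t).inverse (f t)) s := fun t ht ↦
    ((hinv t ht).contDiffAt_map_inverse.comp_contDiffWithinAt t (hA t ht)).clm_apply (hf t ht)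
  exact hsol.congr fun t ht ↦ ((hinv t ht).inverse_apply_eq.2 (hu t ht).symm).symm

theorem IsOpen.contDiffOn_omega_iff_analyticOnNhd {f : Y → F} {s : Set Y} (hs : IsOpen s) :
    ContDiffOn 𝕜 ω f s ↔ AnalyticOnNhd 𝕜 f s := by
  rw [contDiffOn_omega_iff_analyticOn hs.uniqueDiffOn, hs.analyticOn_iff_analyticOnNhd]

end

theorem parameter_to_state_regularity_in_t_general
    {𝕂 V W H Y : Type*} [RCLike 𝕂]
    [NormedAddCommGroup V] [NormedSpace 𝕂 V] [CompleteSpace V]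
    [NormedAddCommGroup W] [NormedSpace 𝕂 W]
    [NormedAddCommGroup H] [NormedSpace 𝕂 H]
    [NormedAddCommGroup Y] [NormedSpace 𝕂 Y]
    (j : V →L[𝕂] H)
    (𝒪 : Set Y) (h𝒪open : IsOpen 𝒪)
    (𝔞₁ : Y → (V →L[𝕂] (W →SL[starRingEnd 𝕂] 𝕂)))
    (𝔠 : Y → (H →L[𝕂] (W →SL[starRingEnd 𝕂] 𝕂)))
    (Φ : Y → (W →SL[starRingEnd 𝕂] 𝕂))
    (hwp : ∀ t ∈ 𝒪, ∀ φ : W →SL[starRingEnd 𝕂] 𝕂,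
      ∃! u : V, ∀ w : W, 𝔞₁ t u w + 𝔠 t (j u) w = φ w)
    (τ : Y → V)
    (hτ : ∀ t ∈ 𝒪, ∀ w : W, 𝔞₁ t (τ t) w + 𝔠 t (j (τ t)) w = Φ t w) :
    (∀ n : ℕ∞, ContDiffOn 𝕂 n Φ 𝒪 → ContDiffOn 𝕂 n 𝔞₁ 𝒪 → ContDiffOn 𝕂 n 𝔠 𝒪 →
      ContDiffOn 𝕂 n τ 𝒪) ∧
    (AnalyticOnNhd 𝕂 Φ 𝒪 → AnalyticOnNhd 𝕂 𝔞₁ 𝒪 → AnalyticOnNhd 𝕂 𝔠 𝒪 →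
      AnalyticOnNhd 𝕂 τ 𝒪) := by
  set A : Y → V →L[𝕂] (W →SL[starRingEnd 𝕂] 𝕂) := fun t ↦ 𝔞₁ t + (𝔠 t).comp j
  have hA_apply_eq : ∀ t u φ, A t u = φ ↔ ∀ w, 𝔞₁ t u w + 𝔠 t (j u) w = φ w :=
    fun _ _ _ ↦ ContinuousLinearMap.ext_iff
  have hinv : ∀ t ∈ 𝒪, (A t).IsInvertible := fun t ht ↦
    isInvertible_of_bijective_s17 <| Function.bijective_iff_existsUnique _ |>.2 fun φ ↦ by
      simpa only [hA_apply_eq] using hwp t ht φ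
  have hregular : ∀ n : WithTop ℕ∞, ContDiffOn 𝕂 n Φ 𝒪 → ContDiffOn 𝕂 n 𝔞₁ 𝒪 →
      ContDiffOn 𝕂 n 𝔠 𝒪 → ContDiffOn 𝕂 n τ 𝒪 := fun n hΦ h𝔞₁ h𝔠 ↦
    contDiffOn_of_isInvertible_of_apply_eq (h𝔞₁.add (h𝔠.clm_comp contDiffOn_const)) hΦ hinv
      fun t ht ↦ (hA_apply_eq _ _ _).2 (hτ t ht)
  refine ⟨fun n ↦ hregular n, ?_⟩
  simpa only [h𝒪open.contDiffOn_omega_iff_analyticOnNhd] using hregular ω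

/-- Theorem 5.5 (regularity with respect to the parameter `t`): if the data maps
`Φ`, `𝔞₁` (equivalently the Lax–Milgram isomorphisms `t ↦ T_t`) and `𝔠` are
`n`-times continuously Fréchet differentiable (resp. analytic) on `𝒪` and the
problem is strongly well-posed for every `t ∈ 𝒪`, then the parameter-to-state
operator `τ` is `n`-times continuously Fréchet differentiable (resp. analytic). -/
theorem parameter_to_state_regularity_in_t
    {𝕂 V W H Y : Type*} [RCLike 𝕂]
    [NormedAddCommGroup V] [NormedSpace 𝕂 V] [CompleteSpace V]
    [NormedAddCommGroup W] [NormedSpace 𝕂 W] [CompleteSpace W] [Nontrivial W]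
    [NormedAddCommGroup H] [NormedSpace 𝕂 H] [CompleteSpace H]
    [NormedAddCommGroup Y] [NormedSpace 𝕂 Y] [CompleteSpace Y]
    (hrefl : Function.Surjective ⇑(NormedSpace.inclusionInDoubleDual 𝕂 W))
    (j : V →L[𝕂] H) (hj : Function.Injective ⇑j)
    (𝒪 : Set Y) (h𝒪open : IsOpen 𝒪) (h𝒪ne : 𝒪.Nonempty)
    (𝔞₁ : Y → (V →L[𝕂] (W →SL[starRingEnd 𝕂] 𝕂)))
    (𝔠 : Y → (H →L[𝕂] (W →SL[starRingEnd 𝕂] 𝕂)))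
    (Φ : Y → (W →SL[starRingEnd 𝕂] 𝕂))
    (c : Y → ℝ) (hc : ∀ t ∈ 𝒪, 0 < c t)
    (hinfsup : ∀ t ∈ 𝒪, ∀ v : V, c t * ‖v‖ ≤ ‖𝔞₁ t v‖)
    (hnondeg : ∀ t ∈ 𝒪, ∀ w : W, (∀ v : V, 𝔞₁ t v w = 0) → w = 0)
    (hwp : ∀ t ∈ 𝒪, ∀ φ : W →SL[starRingEnd 𝕂] 𝕂,
      ∃! u : V, ∀ w : W, 𝔞₁ t u w + 𝔠 t (j u) w = φ w)
    (τ : Y → V)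
    (hτ : ∀ t ∈ 𝒪, ∀ w : W, 𝔞₁ t (τ t) w + 𝔠 t (j (τ t)) w = Φ t w) :
    (∀ n : ℕ∞, ContDiffOn 𝕂 n Φ 𝒪 → ContDiffOn 𝕂 n 𝔞₁ 𝒪 → ContDiffOn 𝕂 n 𝔠 𝒪 →
      ContDiffOn 𝕂 n τ 𝒪) ∧
    (AnalyticOnNhd 𝕂 Φ 𝒪 → AnalyticOnNhd 𝕂 𝔞₁ 𝒪 → AnalyticOnNhd 𝕂 𝔠 𝒪 →
      AnalyticOnNhd 𝕂 τ 𝒪) :=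
  parameter_to_state_regularity_in_t_general j 𝒪 h𝒪open 𝔞₁ 𝔠 Φ hwp τ hτ
end

section
/- Let a₁ be a bounded sesquilinear form on V × W with inf-sup constant c > 0 and nondegenerate in the second component, let λ ∈ 𝕂 with λ ≠ 0, let a₃ be a bounded sesquilinear form on H × W, let 𝔟 : X → S(H × W, 𝕂) be a continuous linear map, and define a₂^{(m)} := −(1/λ)·𝔟(m) + a₃ for m ∈ X. Let 𝒢 ⊆ X be nonempty and open and assume that for every m ∈ 𝒢 and every φ ∈ W* there is exactly one u ∈ V with a₁(u,w) + λ·a₂^{(m)}(ju,w) = φ(w) for all w ∈ W. Fix v₀ ∈ V, set φ_m := 𝔟(m)(jv₀, ·) ∈ W*, and define S : 𝒢 → V by S(m) := u_m + v₀, where u_m ∈ V is the unique solution of a₁(u,w) + λ·a₂^{(m)}(ju,w) = φ_m(w) for all w ∈ W. Then S is continuously Fréchet differentiable on 𝒢, and for every m₀ ∈ 𝒢 and every κ ∈ (0,1) there exists ρ > 0 such that the closed ball B_ρ(m₀) ⊆ 𝒢, the Fréchet derivative DS is bounded on B_ρ(m₀), and for all m₁, m₂ ∈ B_ρ(m₀):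 ‖j(S(m₁) − S(m₂) − DS(m₂)[m₁ − m₂])‖_H ≤ κ‖j(S(m₁) − S(m₂))‖_H and ‖S(m₁) − S(m₂) − DS(m₂)[m₁ − m₂]‖_V ≤ κ‖S(m₁) − S(m₂)‖_V (κ-tangential cone condition in both norms). -/
set_option maxHeartbeats 4000000 in
/-- Theorem 5.11 (abstract inverse scattering setting): with
`a₂^{(m)} = −(1/λ)·𝔟(m) + a₃` (`𝔟` continuous linear in `m`, `λ ≠ 0`), strong
well-posedness on the open set `𝒢` of the problem
`a₁(u,w) + λ·a₂^{(m)}(ju,w) = φ(w)`, and the scattering-type parameter-to-state map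
`S(m) = u_m + v₀`, where `u_m` solves the problem with right-hand side
`φ_m = 𝔟(m)(jv₀, ·)`, the map `S` is continuously Fréchet differentiable on `𝒢` and
satisfies, locally around every `m₀ ∈ 𝒢` and for every `κ ∈ (0,1)`, the
`κ`-tangential cone condition with respect to both `‖·‖_H` and `‖·‖_V`. -/
theorem scattering_tangential_cone_condition
    {𝕂 V W H X : Type*} [RCLike 𝕂]
    [NormedAddCommGroup V] [NormedSpace 𝕂 V] [CompleteSpace V]
    [NormedAddCommGroup W] [NormedSpace 𝕂 W] [CompleteSpace W] [Nontrivial W]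
    [NormedAddCommGroup H] [NormedSpace 𝕂 H] [CompleteSpace H]
    [NormedAddCommGroup X] [NormedSpace 𝕂 X] [CompleteSpace X]
    (hrefl : Function.Surjective ⇑(NormedSpace.inclusionInDoubleDual 𝕂 W))
    (j : V →L[𝕂] H) (hj : Function.Injective ⇑j)
    (a₁ : V →L[𝕂] (W →SL[starRingEnd 𝕂] 𝕂))
    (c : ℝ) (hc : 0 < c)
    (hinfsup : ∀ v : V, c * ‖v‖ ≤ ‖a₁ v‖)
    (hnondeg : ∀ w : W, (∀ v : V, a₁ v w = 0) → w = 0)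
    (lam : 𝕂) (hlam : lam ≠ 0)
    (a₃ : H →L[𝕂] (W →SL[starRingEnd 𝕂] 𝕂))
    (𝔟 : X →L[𝕂] (H →L[𝕂] (W →SL[starRingEnd 𝕂] 𝕂)))
    (a₂ : X → (H →L[𝕂] (W →SL[starRingEnd 𝕂] 𝕂)))
    (ha₂ : ∀ m : X, a₂ m = -((1 / lam) • 𝔟 m) + a₃)
    (𝒢 : Set X) (h𝒢open : IsOpen 𝒢) (h𝒢ne : 𝒢.Nonempty)
    (hwp : ∀ m ∈ 𝒢, ∀ φ : W →SL[starRingEnd 𝕂] 𝕂,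
      ∃! u : V, ∀ w : W, a₁ u w + lam * (a₂ m (j u) w) = φ w)
    (v₀ : V)
    (S : X → V)
    (hS : ∀ m ∈ 𝒢, ∀ w : W,
      a₁ (S m - v₀) w + lam * (a₂ m (j (S m - v₀)) w) = 𝔟 m (j v₀) w) :
    ∃ S' : X → (X →L[𝕂] V),
      (∀ m ∈ 𝒢, HasFDerivAt S (S' m) m) ∧
      ContinuousOn S' 𝒢 ∧
      ∀ m₀ ∈ 𝒢, ∀ κ : ℝ, κ ∈ Set.Ioo (0 : ℝ) 1 →
        ∃ ρ > (0 : ℝ), Metric.closedBall m₀ ρ ⊆ 𝒢 ∧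
          (∃ K : ℝ, ∀ m ∈ Metric.closedBall m₀ ρ, ‖S' m‖ ≤ K) ∧
          ∀ m₁ ∈ Metric.closedBall m₀ ρ, ∀ m₂ ∈ Metric.closedBall m₀ ρ,
            ‖j (S m₁ - S m₂ - S' m₂ (m₁ - m₂))‖ ≤ κ * ‖j (S m₁ - S m₂)‖ ∧
            ‖S m₁ - S m₂ - S' m₂ (m₁ - m₂)‖ ≤ κ * ‖S m₁ - S m₂‖ := by
  classical
  -- trilinear bound for 𝔟
  obtain ⟨Cb, hCb0, hCb⟩ : ∃ C : ℝ, 0 < C ∧ ∀ (dm : X) (x : H), ‖𝔟 dm x‖ ≤ C * ‖dm‖ * ‖x‖ := by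
    obtain ⟨C, hC0, hC⟩ := ContinuousLinearMap.bound 𝔟.flip
    refine ⟨C, hC0, fun dm x => ?_⟩
    have h1 : ‖𝔟 dm x‖ = ‖𝔟.flip x dm‖ := rfl
    rw [h1]
    calc ‖𝔟.flip x dm‖ ≤ ‖𝔟.flip x‖ * ‖dm‖ := (𝔟.flip x).le_opNorm dm
    _ ≤ (C * ‖x‖) * ‖dm‖ := by gcongr; exact hC x
    _ = C * ‖dm‖ * ‖x‖ := by ring
  -- the operator A m
  set A : X → (V →L[𝕂] (W →SL[starRingEnd 𝕂] 𝕂)) :=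
    fun m => a₁ + lam • (a₃.comp j) - ((𝔟 m).comp j) with hAdef
  have hAapp : ∀ (m : X) (u : V) (w : W),
      A m u w = a₁ u w + lam * a₃ (j u) w - 𝔟 m (j u) w := by
    intro m u w
    simp [hAdef, ContinuousLinearMap.smul_apply, smul_eq_mul]
  have hAeq : ∀ (m : X) (u : V) (w : W),
      a₁ u w + lam * (a₂ m (j u) w) = A m u w := by
    intro m u w
    rw [hAapp, ha₂]
    simp only [ContinuousLinearMap.add_apply, ContinuousLinearMap.neg_apply,
      ContinuousLinearMap.smul_apply, smul_eq_mul, ContinuousLinearMap.coe_smul',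
      Pi.smul_apply]
    field_simp
    ring
  -- bijectivity of A m on 𝒢
  have hbij : ∀ m ∈ 𝒢, Function.Bijective (A m) := by
    intro m hm
    constructor
    · intro u u' huu'
      obtain ⟨u'', -, huniq⟩ := hwp m hm (A m u)
      have h1 : u = u'' := huniq u (fun w => by rw [hAeq])
      have h2 : u' = u'' := huniq u' (fun w => by rw [hAeq, huu'])
      rw [h1, h2]
    · intro φ
      obtain ⟨u, hu, -⟩ := hwp m hm φ
      exact ⟨u, by ext w; rw [← hAeq]; exact hu w⟩
  -- inverse operators B m
  have hBex : ∀ m : X, ∃ Bm : (W →SL[starRingEnd 𝕂] 𝕂) →L[𝕂] V,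
      m ∈ 𝒢 → (∀ φ, A m (Bm φ) = φ) ∧ (∀ u, Bm (A m u) = u) := by
    intro m
    by_cases hm : m ∈ 𝒢
    · obtain ⟨hinj, hsurj⟩ := hbij m hm
      let e := ContinuousLinearEquiv.ofBijective (A m)
        (LinearMap.ker_eq_bot.mpr hinj) (LinearMap.range_eq_top.mpr hsurj)
      refine ⟨e.symm.toContinuousLinearMap, fun _ => ⟨fun φ => ?_, fun u => ?_⟩⟩
      · exact e.apply_symm_apply φ
      · exact e.symm_apply_apply u
    · exact ⟨0, fun h => absurd h hm⟩
  choose B hB using hBex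
  -- constancy of A m (S m) on 𝒢
  have hSA : ∀ m ∈ 𝒢, ∀ w : W, A m (S m) w = a₁ v₀ w + lam * a₃ (j v₀) w := by
    intro m hm w
    have h1 := hS m hm w
    rw [hAeq] at h1
    have h2 : A m (S m - v₀) w = A m (S m) w - A m v₀ w := by
      rw [map_sub]; simp [ContinuousLinearMap.sub_apply]
    rw [h2] at h1
    have h3 := hAapp m v₀ w
    linear_combination h1 + h3
  -- key identity
  have hkey : ∀ m₁ ∈ 𝒢, ∀ m₂ ∈ 𝒢,
      A m₂ (S m₁ - S m₂) = 𝔟 (m₁ - m₂) (j (S m₁)) := by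
    intro m₁ h₁ m₂ h₂
    ext w
    have e1 := hSA m₁ h₁ w
    have e2 := hSA m₂ h₂ w
    have e3 := hAapp m₂ (S m₁) w
    have e4 := hAapp m₁ (S m₁) w
    have h2 : A m₂ (S m₁ - S m₂) w = A m₂ (S m₁) w - A m₂ (S m₂) w := by
      rw [map_sub]; simp [ContinuousLinearMap.sub_apply]
    have h5 : 𝔟 (m₁ - m₂) (j (S m₁)) w = 𝔟 m₁ (j (S m₁)) w - 𝔟 m₂ (j (S m₁)) w := by
      rw [map_sub]; simp [ContinuousLinearMap.sub_apply]
    rw [h2, h5]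
    linear_combination e3 - e4 + e1 - e2
  have hdiff : ∀ m₁ ∈ 𝒢, ∀ m₂ ∈ 𝒢,
      S m₁ - S m₂ = B m₂ (𝔟 (m₁ - m₂) (j (S m₁))) := by
    intro m₁ h₁ m₂ h₂
    rw [← hkey m₁ h₁ m₂ h₂, (hB m₂ h₂).2]
  -- the candidate derivative
  set S' : X → (X →L[𝕂] V) := fun m => (B m).comp (𝔟.flip (j (S m))) with hS'def
  have hS'app : ∀ m dm, S' m dm = B m (𝔟 dm (j (S m))) := fun m dm => rfl
    -- remainder identity
  have hrem : ∀ m₁ ∈ 𝒢, ∀ m₂ ∈ 𝒢,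
      S m₁ - S m₂ - S' m₂ (m₁ - m₂) = B m₂ (𝔟 (m₁ - m₂) (j (S m₁ - S m₂))) := by
    intro m₁ h₁ m₂ h₂
    rw [hS'app]
    have hr : 𝔟 (m₁ - m₂) (j (S m₁ - S m₂))
        = 𝔟 (m₁ - m₂) (j (S m₁)) - 𝔟 (m₁ - m₂) (j (S m₂)) := by
      rw [map_sub j, map_sub]
    rw [hr, map_sub (B m₂), ← hdiff m₁ h₁ m₂ h₂]
  -- basic norm estimates
  have hBnn : ∀ m : X, (0:ℝ) ≤ ‖B m‖ := fun m => ContinuousLinearMap.opNorm_nonneg (B m)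
  have hjnn : (0:ℝ) ≤ ‖j‖ := ContinuousLinearMap.opNorm_nonneg j
  have hBnorm : ∀ (m δ : X) (x : H), ‖B m (𝔟 δ x)‖ ≤ ‖B m‖ * Cb * ‖δ‖ * ‖x‖ := by
    intro m δ x
    have l1 : ‖B m (𝔟 δ x)‖ ≤ ‖B m‖ * ‖𝔟 δ x‖ := (B m).le_opNorm _
    have l2 : ‖B m‖ * ‖𝔟 δ x‖ ≤ ‖B m‖ * (Cb * ‖δ‖ * ‖x‖) :=
      mul_le_mul_of_nonneg_left (hCb δ x) (hBnn m)
    linarith [l1, l2]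
  have hjle : ∀ v : V, ‖j v‖ ≤ ‖j‖ * ‖v‖ := fun v => j.le_opNorm v
  -- resolvent identity
  have hres : ∀ m ∈ 𝒢, ∀ m' ∈ 𝒢, ∀ φ : W →SL[starRingEnd 𝕂] 𝕂,
      B m' φ = B m φ + B m' (𝔟 (m' - m) (j (B m φ))) := by
    intro m hm m' hm' φ
    have hA' : A m' (B m φ) = φ - 𝔟 (m' - m) (j (B m φ)) := by
      ext w
      have e3 := hAapp m' (B m φ) w
      have e4 := hAapp m (B m φ) w
      have e5 : A m (B m φ) w = φ w := by rw [(hB m hm).1 φ]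
      have h5 : (φ - 𝔟 (m' - m) (j (B m φ))) w
          = φ w - (𝔟 m' (j (B m φ)) w - 𝔟 m (j (B m φ)) w) := by
        rw [ContinuousLinearMap.sub_apply]
        congr 1
        rw [map_sub]
        simp [ContinuousLinearMap.sub_apply]
      rw [h5]
      linear_combination e3 - e4 + e5
    have h6 := congrArg (B m') hA'
    rw [(hB m' hm').2, map_sub] at h6
    exact (eq_sub_iff_add_eq.mp h6).symm
  -- local bound for B
  have hBloc : ∀ m ∈ 𝒢, ∀ m' ∈ 𝒢, ‖B m‖ * Cb * ‖j‖ * ‖m' - m‖ ≤ 1/2 →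
      ‖B m'‖ ≤ 2 * ‖B m‖ := by
    intro m hm m' hm' ht
    have key : ‖B m'‖ ≤ ‖B m‖ + ‖B m‖ * Cb * ‖j‖ * ‖m' - m‖ * ‖B m'‖ := by
      apply ContinuousLinearMap.opNorm_le_bound
      · positivity
      intro φ
      rw [hres m hm m' hm' φ]
      have hφn : (0:ℝ) ≤ ‖φ‖ := norm_nonneg φ
      have l4 : ‖B m φ + B m' (𝔟 (m' - m) (j (B m φ)))‖
          ≤ ‖B m φ‖ + ‖B m' (𝔟 (m' - m) (j (B m φ)))‖ := norm_add_le _ _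
      have l1 : ‖B m φ‖ ≤ ‖B m‖ * ‖φ‖ := (B m).le_opNorm φ
      have l2 : ‖B m' (𝔟 (m' - m) (j (B m φ)))‖
          ≤ ‖B m'‖ * Cb * ‖m' - m‖ * ‖j (B m φ)‖ := hBnorm m' (m' - m) _
      have l3 : ‖j (B m φ)‖ ≤ ‖j‖ * (‖B m‖ * ‖φ‖) :=
        le_trans (hjle (B m φ)) (mul_le_mul_of_nonneg_left l1 hjnn)
      have h0 : (0:ℝ) ≤ ‖B m'‖ * Cb * ‖m' - m‖ := by positivity
      have l5 : ‖B m'‖ * Cb * ‖m' - m‖ * ‖j (B m φ)‖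
          ≤ ‖B m'‖ * Cb * ‖m' - m‖ * (‖j‖ * (‖B m‖ * ‖φ‖)) :=
        mul_le_mul_of_nonneg_left l3 h0
      linarith [l4, l1, l2, l5]
    have h1 : ‖B m‖ * Cb * ‖j‖ * ‖m' - m‖ * ‖B m'‖ ≤ (1/2) * ‖B m'‖ :=
      mul_le_mul_of_nonneg_right ht (hBnn m')
    linarith
  -- local bound for S
  have hSloc : ∀ m ∈ 𝒢, ∀ m' ∈ 𝒢, ‖B m‖ * Cb * ‖j‖ * ‖m' - m‖ ≤ 1/2 →
      ‖S m' - S m‖ ≤ 2 * (‖B m‖ * Cb * ‖j‖ * ‖S m‖) * ‖m' - m‖ ∧ ‖S m'‖ ≤ 2 * ‖S m‖ := by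
    intro m hm m' hm' ht
    have h1 : ‖S m' - S m‖ ≤ ‖B m‖ * Cb * ‖j‖ * ‖m' - m‖ * ‖S m'‖ := by
      rw [hdiff m' hm' m hm]
      have l2 := hBnorm m (m' - m) (j (S m'))
      have l3 := hjle (S m')
      have h0 : (0:ℝ) ≤ ‖B m‖ * Cb * ‖m' - m‖ := by positivity
      linarith [l2, mul_le_mul_of_nonneg_left l3 h0]
    have h2 : ‖S m'‖ ≤ ‖S m‖ + ‖S m' - S m‖ := by
      calc ‖S m'‖ = ‖S m + (S m' - S m)‖ := by congr 1; abel
      _ ≤ ‖S m‖ + ‖S m' - S m‖ := norm_add_le _ _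
    have hp : ‖B m‖ * Cb * ‖j‖ * ‖m' - m‖ * ‖S m'‖ ≤ (1/2) * ‖S m'‖ :=
      mul_le_mul_of_nonneg_right ht (norm_nonneg _)
    have h3 : ‖S m'‖ ≤ 2 * ‖S m‖ := by linarith
    refine ⟨?_, h3⟩
    have h0 : (0:ℝ) ≤ ‖B m‖ * Cb * ‖j‖ * ‖m' - m‖ := by positivity
    have h4 := mul_le_mul_of_nonneg_left h3 h0
    linarith [h1, h4]
  refine ⟨S', ?_, ?_, ?_⟩
  · -- differentiability
    intro m hm
    rw [hasFDerivAt_iff_isLittleO_nhds_zero, Asymptotics.isLittleO_iff]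
    intro ε hε
    obtain ⟨r, hr0, hball⟩ := Metric.isOpen_iff.1 h𝒢open m hm
    have hδ0 : (0:ℝ) < min (r/2)
        (min ((1/2) / (‖B m‖ * Cb * ‖j‖ + 1))
          (ε / (4 * (‖B m‖ * Cb * ‖j‖) * (‖B m‖ * Cb * ‖j‖) * ‖S m‖ + 1))) := by
      have h1 : (0:ℝ) < r/2 := by linarith
      have h2 : (0:ℝ) < (1/2) / (‖B m‖ * Cb * ‖j‖ + 1) := by positivity
      have h3 : (0:ℝ) < ε / (4 * (‖B m‖ * Cb * ‖j‖) * (‖B m‖ * Cb * ‖j‖) * ‖S m‖ + 1) := by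
        positivity
      exact lt_min h1 (lt_min h2 h3)
    filter_upwards [Metric.ball_mem_nhds (0 : X) hδ0] with h hh
    rw [Metric.mem_ball, dist_zero_right] at hh
    have hsub : m + h - m = h := by abel
    have hmem : m + h ∈ 𝒢 := by
      apply hball
      rw [Metric.mem_ball, dist_eq_norm, hsub]
      calc ‖h‖ < _ := hh
      _ ≤ r/2 := min_le_left _ _
      _ < r := by linarith
    have hc1 : ‖B m‖ * Cb * ‖j‖ * ‖m + h - m‖ ≤ 1/2 := by
      rw [hsub]
      have h1 : ‖h‖ ≤ (1/2) / (‖B m‖ * Cb * ‖j‖ + 1) :=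
        le_trans hh.le (le_trans (min_le_right _ _) (min_le_left _ _))
      have h2 : (0:ℝ) < ‖B m‖ * Cb * ‖j‖ + 1 := by positivity
      rw [le_div_iff₀ h2] at h1
      linarith [h1, norm_nonneg h]
    obtain ⟨hd1, hd2⟩ := hSloc m hm (m + h) hmem hc1
    rw [hsub] at hd1
    have hrm := hrem (m + h) hmem m hm
    rw [hsub] at hrm
    rw [hrm]
    -- smallness of step
    have h3 : ‖h‖ ≤ ε / (4 * (‖B m‖ * Cb * ‖j‖) * (‖B m‖ * Cb * ‖j‖) * ‖S m‖ + 1) :=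
      le_trans hh.le (le_trans (min_le_right _ _) (min_le_right _ _))
    have h4 : (0:ℝ) < 4 * (‖B m‖ * Cb * ‖j‖) * (‖B m‖ * Cb * ‖j‖) * ‖S m‖ + 1 := by positivity
    rw [le_div_iff₀ h4] at h3
    have hmono : (0:ℝ) ≤ (‖B m‖ * Cb * ‖j‖) * (‖B m‖ * Cb * ‖j‖) * ‖S m‖ * ‖h‖ := by positivity
    have key : 2 * ((‖B m‖ * Cb * ‖j‖) * (‖B m‖ * Cb * ‖j‖) * ‖S m‖) * ‖h‖ ≤ ε := by
      linarith [h3, hmono, norm_nonneg h]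
    have key2 := mul_le_mul_of_nonneg_right key (norm_nonneg h)
    -- norm chain
    have l2 := hBnorm m h (j (S (m + h) - S m))
    have l4 : ‖j (S (m + h) - S m)‖
        ≤ ‖j‖ * (2 * (‖B m‖ * Cb * ‖j‖ * ‖S m‖) * ‖h‖) :=
      le_trans (hjle _) (mul_le_mul_of_nonneg_left hd1 hjnn)
    have hpos : (0:ℝ) ≤ ‖B m‖ * Cb * ‖h‖ := by positivity
    have m1 := mul_le_mul_of_nonneg_left l4 hpos
    linarith [l2, m1, key2]
  · -- continuity of the derivative
    intro m₀ hm₀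
    rw [Metric.continuousWithinAt_iff]
    intro ε hε
    obtain ⟨r, hr0, hball⟩ := Metric.isOpen_iff.1 h𝒢open m₀ hm₀
    refine ⟨min (r/2) (min ((1/2) / (‖B m₀‖ * Cb * ‖j‖ + 1))
      (ε / (6 * ‖B m₀‖^2 * Cb^2 * ‖j‖^2 * ‖S m₀‖ + 1))), ?_, ?_⟩
    · have h1 : (0:ℝ) < r/2 := by linarith
      have h2 : (0:ℝ) < (1/2) / (‖B m₀‖ * Cb * ‖j‖ + 1) := by positivity
      have h3 : (0:ℝ) < ε / (6 * ‖B m₀‖^2 * Cb^2 * ‖j‖^2 * ‖S m₀‖ + 1) := by positivity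
      exact lt_min h1 (lt_min h2 h3)
    intro m hmG hdist
    have hnm : ‖m - m₀‖ < min (r/2) (min ((1/2) / (‖B m₀‖ * Cb * ‖j‖ + 1))
        (ε / (6 * ‖B m₀‖^2 * Cb^2 * ‖j‖^2 * ‖S m₀‖ + 1))) := by
      rw [← dist_eq_norm]; exact hdist
    have hq : ‖B m₀‖ * Cb * ‖j‖ * ‖m - m₀‖ ≤ 1/2 := by
      have h1 : ‖m - m₀‖ ≤ (1/2) / (‖B m₀‖ * Cb * ‖j‖ + 1) :=
        le_trans hnm.le (le_trans (min_le_right _ _) (min_le_left _ _))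
      have h2 : (0:ℝ) < ‖B m₀‖ * Cb * ‖j‖ + 1 := by positivity
      rw [le_div_iff₀ h2] at h1
      linarith [h1, norm_nonneg (m - m₀)]
    have hBm : ‖B m‖ ≤ 2 * ‖B m₀‖ := hBloc m₀ hm₀ m hmG hq
    obtain ⟨hSd, hSm⟩ := hSloc m₀ hm₀ m hmG hq
    -- operator-norm bound on the difference of derivatives
    have hop : ‖S' m - S' m₀‖ ≤ 6 * ‖B m₀‖^2 * Cb^2 * ‖j‖^2 * ‖S m₀‖ * ‖m - m₀‖ := by
      apply ContinuousLinearMap.opNorm_le_bound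
      · positivity
      intro dm
      have heq : (S' m - S' m₀) dm
          = B m (𝔟 (m - m₀) (j (B m₀ (𝔟 dm (j (S m))))))
            + B m₀ (𝔟 dm (j (S m - S m₀))) := by
        rw [ContinuousLinearMap.sub_apply, hS'app, hS'app,
          hres m₀ hm₀ m hmG (𝔟 dm (j (S m))), map_sub j, map_sub (𝔟 dm), map_sub (B m₀)]
        abel
      rw [heq]
      have n0 := norm_add_le (B m (𝔟 (m - m₀) (j (B m₀ (𝔟 dm (j (S m)))))))
        (B m₀ (𝔟 dm (j (S m - S m₀))))
      have n1 := hBnorm m (m - m₀) (j (B m₀ (𝔟 dm (j (S m)))))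
      have n3 : ‖𝔟 dm (j (S m))‖ ≤ Cb * ‖dm‖ * (‖j‖ * (2 * ‖S m₀‖)) := by
        refine le_trans (hCb dm (j (S m))) ?_
        have l : ‖j (S m)‖ ≤ ‖j‖ * (2 * ‖S m₀‖) :=
          le_trans (hjle _) (mul_le_mul_of_nonneg_left hSm hjnn)
        exact mul_le_mul_of_nonneg_left l (by positivity)
      have w1 : ‖B m₀ (𝔟 dm (j (S m)))‖ ≤ ‖B m₀‖ * (Cb * ‖dm‖ * (‖j‖ * (2 * ‖S m₀‖))) :=
        le_trans ((B m₀).le_opNorm _) (mul_le_mul_of_nonneg_left n3 (hBnn m₀))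
      have u1b : ‖j (B m₀ (𝔟 dm (j (S m))))‖
          ≤ ‖j‖ * (‖B m₀‖ * (Cb * ‖dm‖ * (‖j‖ * (2 * ‖S m₀‖)))) :=
        le_trans (hjle _) (mul_le_mul_of_nonneg_left w1 hjnn)
      have u1 := le_trans n1 (mul_le_mul_of_nonneg_left u1b (by positivity :
        (0:ℝ) ≤ ‖B m‖ * Cb * ‖m - m₀‖))
      have u1' := mul_le_mul_of_nonneg_right hBm (by positivity :
        (0:ℝ) ≤ Cb * ‖m - m₀‖ * (‖j‖ * (‖B m₀‖ * (Cb * ‖dm‖ * (‖j‖ * (2 * ‖S m₀‖))))))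
      have n4 := hBnorm m₀ dm (j (S m - S m₀))
      have n5 : ‖j (S m - S m₀)‖
          ≤ ‖j‖ * (2 * (‖B m₀‖ * Cb * ‖j‖ * ‖S m₀‖) * ‖m - m₀‖) :=
        le_trans (hjle _) (mul_le_mul_of_nonneg_left hSd hjnn)
      have u4 := le_trans n4 (mul_le_mul_of_nonneg_left n5 (by positivity :
        (0:ℝ) ≤ ‖B m₀‖ * Cb * ‖dm‖))
      linarith [n0, u1, u1', u4]
    rw [dist_eq_norm]
    have hKnn : (0:ℝ) ≤ 6 * ‖B m₀‖^2 * Cb^2 * ‖j‖^2 * ‖S m₀‖ := by positivity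
    have h5 : ‖m - m₀‖ < ε / (6 * ‖B m₀‖^2 * Cb^2 * ‖j‖^2 * ‖S m₀‖ + 1) :=
      lt_of_lt_of_le hnm (le_trans (min_le_right _ _) (min_le_right _ _))
    have h6 : (0:ℝ) < 6 * ‖B m₀‖^2 * Cb^2 * ‖j‖^2 * ‖S m₀‖ + 1 := by positivity
    rw [lt_div_iff₀ h6] at h5
    linarith [hop, h5, norm_nonneg (m - m₀), hKnn]
  · -- tangential cone condition
    intro m₀ hm₀ κ hκ
    obtain ⟨hκ0, hκ1⟩ := hκ
    obtain ⟨r, hr0, hball⟩ := Metric.isOpen_iff.1 h𝒢open m₀ hm₀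
    set ρ : ℝ := min (r/2) (min ((1/2) / (‖B m₀‖ * Cb * ‖j‖ + 1))
      (κ / (4 * (‖B m₀‖ * Cb * ‖j‖) + 1))) with hρdef
    have hρpos : 0 < ρ := by
      have h1 : (0:ℝ) < r/2 := by linarith
      have h2 : (0:ℝ) < (1/2) / (‖B m₀‖ * Cb * ‖j‖ + 1) := by positivity
      have h3 : (0:ℝ) < κ / (4 * (‖B m₀‖ * Cb * ‖j‖) + 1) := by positivity
      exact lt_min h1 (lt_min h2 h3)
    have hρsub : Metric.closedBall m₀ ρ ⊆ 𝒢 := by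
      intro m hmball
      apply hball
      rw [Metric.mem_ball]
      rw [Metric.mem_closedBall] at hmball
      calc dist m m₀ ≤ ρ := hmball
      _ ≤ r/2 := min_le_left _ _
      _ < r := by linarith
    have hmemn : ∀ m ∈ Metric.closedBall m₀ ρ, ‖m - m₀‖ ≤ ρ := by
      intro m hmball
      rw [Metric.mem_closedBall, dist_eq_norm] at hmball
      exact hmball
    have hρhalf : ∀ m ∈ Metric.closedBall m₀ ρ, ‖B m₀‖ * Cb * ‖j‖ * ‖m - m₀‖ ≤ 1/2 := by
      intro m hmball
      have h1 : ‖m - m₀‖ ≤ (1/2) / (‖B m₀‖ * Cb * ‖j‖ + 1) :=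
        le_trans (hmemn m hmball) (le_trans (min_le_right _ _) (min_le_left _ _))
      have h2 : (0:ℝ) < ‖B m₀‖ * Cb * ‖j‖ + 1 := by positivity
      rw [le_div_iff₀ h2] at h1
      linarith [h1, norm_nonneg (m - m₀)]
    have hρκ : ∀ m ∈ Metric.closedBall m₀ ρ,
        ‖m - m₀‖ * (4 * (‖B m₀‖ * Cb * ‖j‖) + 1) ≤ κ := by
      intro m hmball
      have h1 : ‖m - m₀‖ ≤ κ / (4 * (‖B m₀‖ * Cb * ‖j‖) + 1) :=
        le_trans (hmemn m hmball) (le_trans (min_le_right _ _) (min_le_right _ _))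
      have h2 : (0:ℝ) < 4 * (‖B m₀‖ * Cb * ‖j‖) + 1 := by positivity
      rw [le_div_iff₀ h2] at h1
      exact h1
    refine ⟨ρ, hρpos, hρsub, ⟨4 * (‖B m₀‖ * Cb * ‖j‖) * ‖S m₀‖, ?_⟩, ?_⟩
    · -- bound on the derivative
      intro m hmball
      have hmG : m ∈ 𝒢 := hρsub hmball
      have hq := hρhalf m hmball
      have hBm : ‖B m‖ ≤ 2 * ‖B m₀‖ := hBloc m₀ hm₀ m hmG hq
      have hSm : ‖S m‖ ≤ 2 * ‖S m₀‖ := (hSloc m₀ hm₀ m hmG hq).2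
      apply ContinuousLinearMap.opNorm_le_bound
      · positivity
      intro dm
      rw [hS'app]
      have n1 := hBnorm m dm (j (S m))
      have n2 : ‖j (S m)‖ ≤ ‖j‖ * (2 * ‖S m₀‖) :=
        le_trans (hjle _) (mul_le_mul_of_nonneg_left hSm hjnn)
      have u1 := mul_le_mul_of_nonneg_left n2
        (by positivity : (0:ℝ) ≤ ‖B m‖ * Cb * ‖dm‖)
      have u2 := mul_le_mul_of_nonneg_right hBm
        (by positivity : (0:ℝ) ≤ Cb * ‖dm‖ * (‖j‖ * (2 * ‖S m₀‖)))
      linarith [n1, u1, u2]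
    · -- the two cone inequalities
      intro m₁ h1b m₂ h2b
      have h1G : m₁ ∈ 𝒢 := hρsub h1b
      have h2G : m₂ ∈ 𝒢 := hρsub h2b
      have hq₂ := hρhalf m₂ h2b
      have hBm₂ : ‖B m₂‖ ≤ 2 * ‖B m₀‖ := hBloc m₀ hm₀ m₂ h2G hq₂
      -- distance between the two points
      have htri : ‖m₁ - m₂‖ ≤ ‖m₁ - m₀‖ + ‖m₂ - m₀‖ := by
        calc ‖m₁ - m₂‖ = ‖(m₁ - m₀) + (m₀ - m₂)‖ := by congr 1; abel
        _ ≤ ‖m₁ - m₀‖ + ‖m₀ - m₂‖ := norm_add_le _ _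
        _ = ‖m₁ - m₀‖ + ‖m₂ - m₀‖ := by rw [norm_sub_rev m₀ m₂]
      have hκend : 2 * (‖B m₀‖ * Cb * ‖j‖) * ‖m₁ - m₂‖ ≤ κ := by
        have k1 := hρκ m₁ h1b
        have k2 := hρκ m₂ h2b
        have e0 : (0:ℝ) ≤ ‖B m₀‖ * Cb * ‖j‖ := by positivity
        have e1 := mul_le_mul_of_nonneg_left htri e0
        nlinarith [norm_nonneg (m₁ - m₂), norm_nonneg (m₁ - m₀), norm_nonneg (m₂ - m₀)]
      have hrm := hrem m₁ h1G m₂ h2G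
      have n2 := hBnorm m₂ (m₁ - m₂) (j (S m₁ - S m₂))
      constructor
      · -- H-norm inequality
        rw [hrm]
        have n1 := hjle (B m₂ (𝔟 (m₁ - m₂) (j (S m₁ - S m₂))))
        have u2 := mul_le_mul_of_nonneg_left n2 hjnn
        have u3 := mul_le_mul_of_nonneg_right hBm₂
          (by positivity : (0:ℝ) ≤ Cb * ‖m₁ - m₂‖ * ‖j (S m₁ - S m₂)‖)
        have u3' := mul_le_mul_of_nonneg_left u3 hjnn
        have u5 := mul_le_mul_of_nonneg_right hκend (norm_nonneg (j (S m₁ - S m₂)))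
        linarith [n1, u2, u3', u5]
      · -- V-norm inequality
        rw [hrm]
        have u6 := mul_le_mul_of_nonneg_left (hjle (S m₁ - S m₂))
          (by positivity : (0:ℝ) ≤ ‖B m₂‖ * Cb * ‖m₁ - m₂‖)
        have u7 := mul_le_mul_of_nonneg_right hBm₂
          (by positivity : (0:ℝ) ≤ Cb * ‖m₁ - m₂‖ * (‖j‖ * ‖S m₁ - S m₂‖))
        have u8 := mul_le_mul_of_nonneg_right hκend (norm_nonneg (S m₁ - S m₂))
        linarith [n2, u6, u7, u8]
end
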